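/- arXiv:1106.2199 — 7 statements merged into one kernel-verified Lean document; each statement's English description precedes it below -/
import Mathlib

section
/- Let M be a Riemannian manifold without boundary, K a compact subset of the open unit cotangent disk bundle DT*M = {(q,p) ∈ T*M : |p| < 1}, and h ∈ C₀^∞(M) with |dh| ≥ 1 on π_M(K), where π_M : T*M → M is the projection. Then the Hamiltonian H := 2·h∘π_M displaces K, i.e., the time-1 Hamiltonian flow φ of H satisfies φ(K) ∩ K = ∅. -/
open scoped Manifold

/-!
The time-1 flow of `2·h∘π_M` translates each fiber by `2 dh`. On `K` we have `|p| < 1 ≤ |dh|`,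
so by the triangle inequality `|p + 2 dh| ≥ 2|dh| - |p| > 1`: the translated point leaves the
unit disk bundle, in particular `K`.
-/

theorem two_mul_sub_le_add_two_smul {E : Type*} [AddCommGroup E] [Module ℝ E] (N : E → ℝ)
    (N_add : ∀ p q, N (p + q) ≤ N p + N q) (N_smul : ∀ (a : ℝ) p, N (a • p) = |a| * N p)
    (p d : E) : 2 * N d - N p ≤ N (p + (2 : ℝ) • d) := by
  have hsplit : (2 : ℝ) • d = (p + (2 : ℝ) • d) + (-1 : ℝ) • p := by module
  have htri := N_add (p + (2 : ℝ) • d) ((-1 : ℝ) • p)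
  rw [← hsplit, N_smul, N_smul] at htri
  norm_num at htri
  linarith

theorem stmt_1_general {n : ℕ} {M : Type*} [TopologicalSpace M]
    [ChartedSpace (EuclideanSpace ℝ (Fin n)) M]
    (gd : (x : M) → (TangentSpace (𝓡 n) x →L[ℝ] ℝ) → ℝ)
    (gd_add : ∀ (x : M) (p q : TangentSpace (𝓡 n) x →L[ℝ] ℝ),
      gd x (p + q) ≤ gd x p + gd x q)
    (gd_smul : ∀ (x : M) (a : ℝ) (p : TangentSpace (𝓡 n) x →L[ℝ] ℝ),
      gd x (a • p) = |a| * gd x p)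
    (K : Set (Σ x : M, TangentSpace (𝓡 n) x →L[ℝ] ℝ))
    (hK : ∀ qp ∈ K, gd qp.1 qp.2 < 1)
    (h : M → ℝ)
    (hdh : ∀ qp ∈ K, 1 ≤ gd qp.1 (show TangentSpace (𝓡 n) qp.1 →L[ℝ] ℝ from
      mfderiv (𝓡 n) 𝓘(ℝ, ℝ) h qp.1)) :
    Disjoint
      ((fun qp : Σ x : M, TangentSpace (𝓡 n) x →L[ℝ] ℝ =>
        (⟨qp.1, qp.2 + (2 : ℝ) • (show TangentSpace (𝓡 n) qp.1 →L[ℝ] ℝ from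
          mfderiv (𝓡 n) 𝓘(ℝ, ℝ) h qp.1)⟩ : Σ x : M, TangentSpace (𝓡 n) x →L[ℝ] ℝ)) '' K)
      K := by
  rw [Set.disjoint_left]
  rintro _ ⟨⟨q, p⟩, hqp, rfl⟩ hmoved
  have hbound := two_mul_sub_le_add_two_smul (gd q) (gd_add q) (gd_smul q) p
    (mfderiv (𝓡 n) 𝓘(ℝ, ℝ) h q)
  linarith [hK _ hqp, hK _ hmoved, hdh _ hqp]

/-- displacement of a compact subset of the unit cotangent disk
bundle.  The cotangent bundle of `M` is encoded as `Σ x : M, T_xM →L[ℝ] ℝ`, with the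
fiberwise dual norm `gd` induced by the Riemannian metric (a norm on each cotangent
fiber).  If `K` is a compact subset of `DT*M = {(q,p) : |p| < 1}` and `h` is a
compactly supported smooth function with `|dh| ≥ 1` on `π_M(K)`, then the time-1
Hamiltonian flow of `H = 2·h∘π_M`, which is the fiberwise translation
`(q,p) ↦ (q, p + 2 dh_q)`, displaces `K`. -/
theorem stmt_1 {n : ℕ} {M : Type*} [TopologicalSpace M]
    [ChartedSpace (EuclideanSpace ℝ (Fin n)) M] [IsManifold (𝓡 n) (⊤ : ℕ∞) M]
    (gd : (x : M) → (TangentSpace (𝓡 n) x →L[ℝ] ℝ) → ℝ)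
    (gd_add : ∀ (x : M) (p q : TangentSpace (𝓡 n) x →L[ℝ] ℝ),
      gd x (p + q) ≤ gd x p + gd x q)
    (gd_smul : ∀ (x : M) (a : ℝ) (p : TangentSpace (𝓡 n) x →L[ℝ] ℝ),
      gd x (a • p) = |a| * gd x p)
    (K : Set (Σ x : M, TangentSpace (𝓡 n) x →L[ℝ] ℝ))
    (hKcpt : IsCompact K)
    (hK : ∀ qp ∈ K, gd qp.1 qp.2 < 1)
    (h : M → ℝ) (hsm : ContMDiff (𝓡 n) 𝓘(ℝ, ℝ) (⊤ : ℕ∞) h) (hsupp : HasCompactSupport h)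
    (hdh : ∀ qp ∈ K, 1 ≤ gd qp.1 (show TangentSpace (𝓡 n) qp.1 →L[ℝ] ℝ from
      mfderiv (𝓡 n) 𝓘(ℝ, ℝ) h qp.1)) :
    Disjoint
      ((fun qp : Σ x : M, TangentSpace (𝓡 n) x →L[ℝ] ℝ =>
        (⟨qp.1, qp.2 + (2 : ℝ) • (show TangentSpace (𝓡 n) qp.1 →L[ℝ] ℝ from
          mfderiv (𝓡 n) 𝓘(ℝ, ℝ) h qp.1)⟩ : Σ x : M, TangentSpace (𝓡 n) x →L[ℝ] ℝ)) '' K)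
      K :=
  stmt_1_general gd gd_add gd_smul K hK h hdh
end

section
/- Let X be a finite simplicial complex whose geometric realization |X| ⊂ ℝ[V(X)] (with the standard metric) is connected, of dimension at most n. Then for every k with 2 ≤ k ≤ n, the (k−1)-skeleton satisfies diam(|X_{k−1}|) ≤ C_k · diam(|X_k|), where C_k is a constant depending only on k. -/
open scoped ENNReal NNReal

structure SComplex (V : Type*) where
  faces : Set (Finset V)
  singleton_mem : ∀ v : V, {v} ∈ faces
  down_closed : ∀ σ ∈ faces, ∀ τ : Finset V, τ ⊆ σ → τ.Nonempty → τ ∈ faces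

/-- The geometric simplex `|σ| ⊆ ℝ[V]` (standard metric), for `σ` a finite vertex set. -/
def geomFace {V : Type*} [Fintype V] (σ : Finset V) : Set (EuclideanSpace ℝ V) :=
  {x | (∀ v, 0 ≤ x v) ∧ (∀ v, v ∉ σ → x v = 0) ∧ ∑ v, x v = 1}

/-- The geometric realization `|X| ⊆ ℝ[V]`. -/
def realization {V : Type*} [Fintype V] (X : SComplex V) : Set (EuclideanSpace ℝ V) :=
  ⋃ σ ∈ X.faces, geomFace σ

/-- The `k`-skeleton `X_k` of `X`. -/
def SComplex.skeleton {V : Type*} (X : SComplex V) (k : ℕ) : SComplex V where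
  faces := {σ | σ ∈ X.faces ∧ σ.card ≤ k + 1}
  singleton_mem := fun v => ⟨X.singleton_mem v, by simp⟩
  down_closed := fun σ hσ τ hτ hne =>
    ⟨X.down_closed σ hσ.1 τ hτ hne, le_trans (Finset.card_le_card hτ) hσ.2⟩

/-- Intrinsic (path-metric) distance inside a subset `s`: the infimum of lengths of
continuous paths in `s` joining `x` to `y`. -/
noncomputable def pathDist {E : Type*} [PseudoEMetricSpace E] (s : Set E) (x y : E) : ℝ≥0∞ :=
  ⨅ γ : {γ : ℝ → E // ContinuousOn γ (Set.Icc 0 1) ∧ γ 0 = x ∧ γ 1 = y ∧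
      Set.MapsTo γ (Set.Icc 0 1) s},
    eVariationOn γ.1 (Set.Icc 0 1)

/-- Intrinsic diameter of a subset. -/
noncomputable def pathDiam {E : Type*} [PseudoEMetricSpace E] (s : Set E) : ℝ≥0∞ :=
  ⨆ x ∈ s, ⨆ y ∈ s, pathDist s x y

/-!
Let `G` be the graph of vertices and edges of `X` and `D` its diameter; `G` is connected because
`|X|` is. In `|X_m|`, `m ≥ 1`, every point lies within `√2` of a vertex of its face and adjacent
vertices are `√2` apart along their edge, so `diam |X_m| ≤ √2 (D + 2) ≤ 3√2 D`.
Conversely, extend `v ↦ d_G(a, v)` linearly to `g` on `ℝ[V]`. Two points of `|X_k|` at distance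
`< 1/(k+1)` share a vertex (each point has one of weight `≥ 1/(k+1)`), so `g` is
`√(2(k+1))`-Lipschitz at that scale, and a path in `|X_k|` from `a` to a vertex `b` with
`d_G(a, b) = D` has length `≥ D / √(2(k+1))`.
-/

open Set

section PathDist
variable {E : Type*}

lemma pathDist_le_eVariationOn [PseudoEMetricSpace E] {s : Set E} {x y : E} {γ : ℝ → E}
    (hγ : ContinuousOn γ (Icc 0 1)) (h0 : γ 0 = x) (h1 : γ 1 = y) (hs : MapsTo γ (Icc 0 1) s) :
    pathDist s x y ≤ eVariationOn γ (Icc 0 1) :=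
  iInf_le_of_le ⟨γ, hγ, h0, h1, hs⟩ le_rfl

lemma pathDist_self [PseudoEMetricSpace E] {s : Set E} {x : E} (hx : x ∈ s) :
    pathDist s x x = 0 :=
  nonpos_iff_eq_zero.mp <| (pathDist_le_eVariationOn continuousOn_const rfl rfl
    fun _ _ => hx).trans_eq <| eVariationOn.constant_on (by simp)

lemma pathDist_triangle [PseudoEMetricSpace E] (s : Set E) (x y z : E) :
    pathDist s x z ≤ pathDist s x y + pathDist s y z := by
  simp only [pathDist, ENNReal.iInf_add, ENNReal.add_iInf]
  refine le_iInf fun ⟨g₂, hc₂, h0₂, h1₂, hm₂⟩ => le_iInf fun ⟨g₁, hc₁, h0₁, h1₁, hm₁⟩ => ?_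
  set γ : ℝ → E := fun t => if t ≤ 2⁻¹ then g₁ (2 * t) else g₂ (2 * t - 1)
  have hφ₁ : MapsTo (fun t : ℝ => 2 * t) (Icc 0 2⁻¹) (Icc 0 1) :=
    fun t ⟨h₀, h₁⟩ => ⟨by linarith, by linarith⟩
  have hφ₂ : MapsTo (fun t : ℝ => 2 * t - 1) (Icc 2⁻¹ 1) (Icc 0 1) :=
    fun t ⟨h₀, h₁⟩ => ⟨by linarith, by linarith⟩
  have hγ₁ : EqOn γ (g₁ ∘ fun t => 2 * t) (Icc 0 2⁻¹) := fun t ht => if_pos ht.2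
  have hγ₂ : EqOn γ (g₂ ∘ fun t => 2 * t - 1) (Icc 2⁻¹ 1) := by
    intro t ⟨ht, _⟩
    rcases ht.lt_or_eq with ht | rfl
    · exact if_neg (not_le.mpr ht)
    · simp [γ, h1₁, h0₂]
  have hc : ContinuousOn γ (Icc 0 1) := by
    rw [← Icc_union_Icc_eq_Icc (b := 2⁻¹) (by norm_num) (by norm_num)]
    exact ((hc₁.comp (by fun_prop) hφ₁).congr hγ₁).union_of_isClosed
      ((hc₂.comp (by fun_prop) hφ₂).congr hγ₂) isClosed_Icc isClosed_Icc
  have hm : MapsTo γ (Icc 0 1) s := by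
    intro t ⟨h₀, h₁⟩
    by_cases ht : t ≤ 2⁻¹
    · simpa [γ, ht] using hm₁ ⟨by linarith, by linarith⟩
    · simpa [γ, ht] using hm₂ ⟨by linarith, by linarith⟩
  refine (pathDist_le_eVariationOn hc (by simp [γ, h0₁]) (by norm_num [γ, h1₂]) hm).trans ?_
  have hsplit := eVariationOn.Icc_add_Icc γ (s := univ) (a := 0) (b := 2⁻¹) (c := 1)
    (by norm_num) (by norm_num) (mem_univ _)
  simp only [univ_inter] at hsplit
  rw [← hsplit, eVariationOn.eq_of_eqOn hγ₁, eVariationOn.eq_of_eqOn hγ₂]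
  gcongr
  · exact eVariationOn.comp_le_of_monotoneOn g₁ _ (fun a _ b _ h => by linarith) hφ₁
  · exact eVariationOn.comp_le_of_monotoneOn g₂ _ (fun a _ b _ h => by linarith) hφ₂

lemma pathDist_le_edist_of_segment_subset [SeminormedAddCommGroup E] [NormedSpace ℝ E]
    {s : Set E} {x y : E} (h : segment ℝ x y ⊆ s) : pathDist s x y ≤ edist x y := by
  have hvar : eVariationOn (AffineMap.lineMap x y : ℝ → E) (Icc 0 1) ≤ nndist x y * 1 := by
    refine ((lipschitzWith_lineMap x y).lipschitzOnWith.comp_eVariationOn_le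
      (mapsTo_univ id _)).trans (mul_le_mul_right ?_ _)
    simp
  rw [mul_one, ← edist_nndist] at hvar
  refine (pathDist_le_eVariationOn (AffineMap.lineMap_continuous.continuousOn) (by simp)
    (by simp) fun t ht => h ?_).trans hvar
  rw [segment_eq_image_lineMap]
  exact mem_image_of_mem _ ht

lemma pathDiam_eq_zero_of_subsingleton {E : Type*} [PseudoEMetricSpace E] {s : Set E}
    (hs : s.Subsingleton) : pathDiam s = 0 :=
  nonpos_iff_eq_zero.mp <| iSup₂_le fun x hx => iSup₂_le fun y hy => by
    rw [hs hx hy, pathDist_self hy]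

lemma pathDist_le_pathDiam {E : Type*} [PseudoEMetricSpace E] {s : Set E} {x y : E} (hx : x ∈ s)
    (hy : y ∈ s) : pathDist s x y ≤ pathDiam s :=
  le_iSup₂_of_le x hx (le_iSup₂_of_le y hy le_rfl)

end PathDist

section Simplex
variable {V : Type*} [Fintype V]

lemma convex_geomFace (σ : Finset V) : Convex ℝ (geomFace σ) := by
  intro x ⟨hx₀, hxσ, hx₁⟩ y ⟨hy₀, hyσ, hy₁⟩ a b ha hb hab
  refine ⟨fun v => ?_, fun v hv => ?_, ?_⟩
  · simp only [PiLp.add_apply, PiLp.smul_apply, smul_eq_mul]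
    have := hx₀ v; have := hy₀ v; positivity
  · simp [hxσ v hv, hyσ v hv]
  · simp [Finset.sum_add_distrib, ← Finset.mul_sum, hx₁, hy₁, hab]

lemma mem_of_mem_geomFace_of_pos {σ : Finset V} {x : EuclideanSpace ℝ V} (hx : x ∈ geomFace σ)
    {v : V} (hv : 0 < x v) : v ∈ σ := by
  by_contra h
  exact hv.ne' (hx.2.1 v h)

lemma exists_pos_of_mem_geomFace {σ : Finset V} {x : EuclideanSpace ℝ V} (hx : x ∈ geomFace σ) :
    ∃ v, 0 < x v := by
  by_contra! h
  have : ∑ v, x v ≤ 0 := Finset.sum_nonpos fun v _ => h v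
  linarith [hx.2.2]

lemma sum_eq_one_of_mem_geomFace {σ : Finset V} {x : EuclideanSpace ℝ V} (hx : x ∈ geomFace σ) :
    ∑ v ∈ σ, x v = 1 := by
  rw [← hx.2.2, Finset.sum_subset (Finset.subset_univ σ) fun v _ hv => hx.2.1 v hv]

lemma exists_inv_le_of_mem_geomFace {σ : Finset V} {x : EuclideanSpace ℝ V}
    (hx : x ∈ geomFace σ) {m : ℕ} (hσ : σ.card ≤ m) : ∃ v ∈ σ, (m : ℝ)⁻¹ ≤ x v := by
  have hne : σ.Nonempty := by
    obtain ⟨v, hv⟩ := exists_pos_of_mem_geomFace hx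
    exact ⟨v, mem_of_mem_geomFace_of_pos hx hv⟩
  obtain ⟨u, hu, hmax⟩ := σ.exists_max_image x hne
  have hm : (0 : ℝ) < m := by exact_mod_cast hne.card_pos.trans_le hσ
  refine ⟨u, hu, (inv_le_iff_one_le_mul₀' hm).mpr ?_⟩
  calc (1 : ℝ) = ∑ v ∈ σ, x v := (sum_eq_one_of_mem_geomFace hx).symm
    _ ≤ σ.card * x u := by simpa using Finset.sum_le_sum hmax
    _ ≤ m * x u := by gcongr; exact hx.1 u

lemma dist_le_sqrt_two_of_mem_geomFace {σ τ : Finset V} {x y : EuclideanSpace ℝ V}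
    (hx : x ∈ geomFace σ) (hy : y ∈ geomFace τ) : dist x y ≤ √2 := by
  have hle : ∀ {σ : Finset V} {x : EuclideanSpace ℝ V}, x ∈ geomFace σ → ∀ v, x v ≤ 1 :=
    fun hx v => hx.2.2 ▸ Finset.single_le_sum (fun w _ => hx.1 w) (Finset.mem_univ v)
  rw [EuclideanSpace.dist_eq]
  gcongr
  calc ∑ v, dist (x v) (y v) ^ 2 ≤ ∑ v, (x v + y v) := by
        gcongr with v
        rw [Real.dist_eq, sq_abs]
        nlinarith [hx.1 v, hy.1 v, hle hx v, hle hy v]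
    _ = 2 := by rw [Finset.sum_add_distrib, hx.2.2, hy.2.2]; norm_num

variable [DecidableEq V]

lemma single_mem_geomFace {σ : Finset V} {v : V} (hv : v ∈ σ) :
    EuclideanSpace.single v (1 : ℝ) ∈ geomFace σ := by
  refine ⟨fun w => ?_, fun w hw => ?_, by simp⟩
  · by_cases h : w = v <;> simp [h]
  · simp [show w ≠ v by rintro rfl; exact hw hv]

lemma single_mem_realization (X : SComplex V) (v : V) :
    EuclideanSpace.single v (1 : ℝ) ∈ realization X :=
  mem_biUnion (X.singleton_mem v) (single_mem_geomFace (Finset.mem_singleton_self v))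

end Simplex

def edgeGraph {V : Type*} [DecidableEq V] (X : SComplex V) : SimpleGraph V where
  Adj v w := v ≠ w ∧ ({v, w} : Finset V) ∈ X.faces
  symm := ⟨fun v w ⟨hne, h⟩ => ⟨hne.symm, Finset.pair_comm v w ▸ h⟩⟩
  loopless := ⟨fun _ h => h.1 rfl⟩

section EdgeGraph
variable {V : Type*} [DecidableEq V] {X : SComplex V}

lemma edgeGraph_adj_of_mem_face {σ : Finset V} (hσ : σ ∈ X.faces) {v w : V} (hv : v ∈ σ)
    (hw : w ∈ σ) (hvw : v ≠ w) : (edgeGraph X).Adj v w :=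
  ⟨hvw, X.down_closed σ hσ _ (Finset.insert_subset hv (Finset.singleton_subset_iff.mpr hw))
    (Finset.insert_nonempty _ _)⟩

lemma abs_dist_sub_dist_le_one_of_mem_face {σ : Finset V} (hσ : σ ∈ X.faces) (a : V) {v w : V}
    (hv : v ∈ σ) (hw : w ∈ σ) :
    |((edgeGraph X).dist a v : ℝ) - (edgeGraph X).dist a w| ≤ 1 := by
  rcases eq_or_ne v w with rfl | hvw
  · simp
  have h : (edgeGraph X).dist a v ≤ (edgeGraph X).dist a w + 1 ∧
      (edgeGraph X).dist a w ≤ (edgeGraph X).dist a v + 1 := by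
    rcases (edgeGraph_adj_of_mem_face hσ hw hv hvw.symm).diff_dist_adj (u := a) with h | h | h <;>
      omega
  have h₁ : ((edgeGraph X).dist a v : ℝ) ≤ (edgeGraph X).dist a w + 1 := by exact_mod_cast h.1
  have h₂ : ((edgeGraph X).dist a w : ℝ) ≤ (edgeGraph X).dist a v + 1 := by exact_mod_cast h.2
  rw [abs_le]
  constructor <;> linarith

variable [Fintype V]

lemma edgeGraph_reachable_of_pos {x : EuclideanSpace ℝ V} (hx : x ∈ realization X) {v w : V}
    (hv : 0 < x v) (hw : 0 < x w) : (edgeGraph X).Reachable v w := by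
  obtain ⟨σ, hσ, hxσ⟩ := mem_iUnion₂.mp hx
  rcases eq_or_ne v w with rfl | hvw
  · rfl
  exact (edgeGraph_adj_of_mem_face hσ (mem_of_mem_geomFace_of_pos hxσ hv)
    (mem_of_mem_geomFace_of_pos hxσ hw) hvw).reachable

lemma edgeGraph_connected (hX : IsConnected (realization X)) : (edgeGraph X).Connected := by
  obtain ⟨x₀, hx₀⟩ := hX.nonempty
  obtain ⟨σ, -, hx₀σ⟩ := mem_iUnion₂.mp hx₀
  obtain ⟨a, -⟩ := exists_pos_of_mem_geomFace hx₀σ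
  refine (SimpleGraph.connected_iff_exists_forall_reachable _).mpr ⟨a, fun b => ?_⟩
  by_contra hab
  -- the points charging the component of `a`, resp. its complement, form an open cover of `|X|`
  -- whose parts meet only off `|X|`
  let U (p : V → Prop) : Set (EuclideanSpace ℝ V) := ⋃ v ∈ {v | p v}, {x | 0 < x v}
  have hU (p : V → Prop) : IsOpen (U p) :=
    isOpen_biUnion fun v _ => isOpen_lt continuous_const (by fun_prop)
  have hsingle (v : V) : (0 : ℝ) < EuclideanSpace.single v (1 : ℝ) v := by simp
  obtain ⟨x, hx, hxa, hxb⟩ := hX.isPreconnected _ _ (hU ((edgeGraph X).Reachable a))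
    (hU fun v => ¬(edgeGraph X).Reachable a v)
    (fun x hx => by
      obtain ⟨σ, -, hxσ⟩ := mem_iUnion₂.mp hx
      obtain ⟨v, hv⟩ := exists_pos_of_mem_geomFace hxσ
      by_cases h : (edgeGraph X).Reachable a v
      exacts [Or.inl (mem_biUnion h hv), Or.inr (mem_biUnion h hv)])
    ⟨_, single_mem_realization X a, mem_biUnion (SimpleGraph.Reachable.refl a) (hsingle a)⟩
    ⟨_, single_mem_realization X b, mem_biUnion hab (hsingle b)⟩
  obtain ⟨v, hav, hv⟩ := mem_iUnion₂.mp hxa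
  obtain ⟨w, haw, hw⟩ := mem_iUnion₂.mp hxb
  exact haw (hav.trans (edgeGraph_reachable_of_pos hx hv hw))

end EdgeGraph

lemma edist_le_mul_eVariationOn_of_dist_lt {E F : Type*} [PseudoMetricSpace E]
    [PseudoMetricSpace F] {s : Set E} {f : E → F} {L : ℝ≥0} {ε : ℝ} (hε : 0 < ε)
    (hf : ∀ x ∈ s, ∀ y ∈ s, dist x y < ε → dist (f x) (f y) ≤ L * dist x y)
    {γ : ℝ → E} (hγ : ContinuousOn γ (Icc 0 1)) (hs : MapsTo γ (Icc 0 1) s) :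
    edist (f (γ 0)) (f (γ 1)) ≤ L * eVariationOn γ (Icc 0 1) := by
  obtain ⟨δ, hδ, hγδ⟩ := Metric.uniformContinuousOn_iff.mp
    (isCompact_Icc.uniformContinuousOn_of_continuous hγ) ε hε
  obtain ⟨N, hN⟩ := exists_nat_one_div_lt hδ
  have hN₀ : (0 : ℝ) < N + 1 := by positivity
  set u : ℕ → ℝ := fun i => i / (N + 1)
  have hu : MonotoneOn u (Icc 0 (N + 1)) := fun i _ j _ hij => by
    simp only [u]; gcongr
  have hmem : ∀ i ∈ Icc 0 (N + 1), u i ∈ Icc (0 : ℝ) 1 := fun i hi =>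
    ⟨by positivity, (div_le_one hN₀).mpr (by exact_mod_cast hi.2)⟩
  have hstep : ∀ i ∈ Finset.range (N + 1),
      edist (f (γ (u i))) (f (γ (u (i + 1)))) ≤ L * edist (γ (u (i + 1))) (γ (u i)) := by
    intro i hi
    have hi : i + 1 ≤ N + 1 := Finset.mem_range.mp hi
    have hui : u i ∈ Icc (0 : ℝ) 1 := hmem i ⟨i.zero_le, by omega⟩
    have hui' : u (i + 1) ∈ Icc (0 : ℝ) 1 := hmem (i + 1) ⟨(i + 1).zero_le, hi⟩
    have hdu : dist (u i) (u (i + 1)) < δ := by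
      have : u (i + 1) - u i = 1 / (N + 1) := by simp only [u]; push_cast; ring
      rwa [Real.dist_eq, abs_sub_comm, this, abs_of_pos (by positivity)]
    rw [edist_dist, edist_dist, dist_comm (γ _), ← ENNReal.ofReal_coe_nnreal,
      ← ENNReal.ofReal_mul L.coe_nonneg]
    exact ENNReal.ofReal_le_ofReal (hf _ (hs hui) _ (hs hui') (hγδ _ hui _ hui' hdu))
  calc edist (f (γ 0)) (f (γ 1)) = edist (f (γ (u 0))) (f (γ (u (N + 1)))) := by
        simp [u, hN₀.ne']
    _ ≤ ∑ i ∈ Finset.range (N + 1), edist (f (γ (u i))) (f (γ (u (i + 1)))) :=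
        edist_le_range_sum_edist (fun i => f (γ (u i))) _
    _ ≤ ∑ i ∈ Finset.range (N + 1), L * edist (γ (u (i + 1))) (γ (u i)) :=
        Finset.sum_le_sum hstep
    _ ≤ L * eVariationOn γ (Icc 0 1) := by
        rw [← Finset.mul_sum, Finset.range_eq_Ico]
        gcongr
        exact eVariationOn.sum_le_of_monotoneOn_Icc hu hmem

section LinearExtension
variable {V : Type*} [Fintype V]

noncomputable def linearExtension (d : V → ℝ) (x : EuclideanSpace ℝ V) : ℝ := ∑ v, d v * x v

lemma linearExtension_single [DecidableEq V] (d : V → ℝ) (v : V) :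
    linearExtension d (EuclideanSpace.single v 1) = d v := by
  simp [linearExtension]

lemma abs_linearExtension_sub_le [DecidableEq V] {d : V → ℝ} {σ τ : Finset V}
    {x y : EuclideanSpace ℝ V} (hx : x ∈ geomFace σ) (hy : y ∈ geomFace τ) {c : ℝ}
    (hd : ∀ v ∈ σ ∪ τ, |d v - c| ≤ 1) :
    |linearExtension d x - linearExtension d y| ≤ √(σ ∪ τ).card * dist x y := by
  set S := σ ∪ τ
  -- as `∑ x = ∑ y = 1`, the shift by `c` does not change the difference
  have hdiff : linearExtension d x - linearExtension d y = ∑ v ∈ S, (d v - c) * (x v - y v) := by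
    rw [Finset.sum_subset (Finset.subset_univ S) fun v _ hv => ?_]
    · simp only [linearExtension, sub_mul, mul_sub, Finset.sum_sub_distrib, ← Finset.mul_sum]
      rw [hx.2.2, hy.2.2]
      ring
    · rw [Finset.mem_union, not_or] at hv
      rw [hx.2.1 v hv.1, hy.2.1 v hv.2, sub_self, mul_zero]
  have hcoord : √(∑ v ∈ S, |x v - y v| ^ 2) ≤ dist x y := by
    rw [EuclideanSpace.dist_eq]
    gcongr
    refine (Finset.sum_le_sum_of_subset_of_nonneg (Finset.subset_univ S)
      fun _ _ _ => by positivity).trans_eq ?_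
    simp [Real.dist_eq]
  rw [hdiff]
  calc |∑ v ∈ S, (d v - c) * (x v - y v)| ≤ ∑ v ∈ S, |d v - c| * |x v - y v| := by
        simpa only [abs_mul] using Finset.abs_sum_le_sum_abs (fun v => (d v - c) * (x v - y v)) S
    _ ≤ √(∑ v ∈ S, |d v - c| ^ 2) * √(∑ v ∈ S, |x v - y v| ^ 2) :=
        Real.sum_mul_le_sqrt_mul_sqrt _ _ _
    _ ≤ √S.card * dist x y := by
        gcongr
        calc ∑ v ∈ S, |d v - c| ^ 2 ≤ ∑ v ∈ S, (1 : ℝ) := by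
              gcongr with v hv
              exact pow_le_one₀ (abs_nonneg _) (hd v hv)
          _ = S.card := by simp

lemma abs_linearExtension_sub_le_of_dist_lt [DecidableEq V] {X : SComplex V} {d : V → ℝ}
    (hd : ∀ σ ∈ X.faces, ∀ v ∈ σ, ∀ w ∈ σ, |d v - d w| ≤ 1) {k : ℕ} {x y : EuclideanSpace ℝ V}
    (hx : x ∈ realization (X.skeleton k)) (hy : y ∈ realization (X.skeleton k))
    (hxy : dist x y < ((k : ℝ) + 1)⁻¹) :
    |linearExtension d x - linearExtension d y| ≤ √(2 * ((k : ℝ) + 1)) * dist x y := by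
  obtain ⟨σ, ⟨hσ, hσk⟩, hxσ⟩ := mem_iUnion₂.mp hx
  obtain ⟨τ, ⟨hτ, hτk⟩, hyτ⟩ := mem_iUnion₂.mp hy
  obtain ⟨w, hwσ, hxw⟩ := exists_inv_le_of_mem_geomFace hxσ hσk
  -- `x` and `y` are so close that the heavy vertex `w` of `x` also carries weight in `y`
  have hwτ : w ∈ τ := by
    refine mem_of_mem_geomFace_of_pos hyτ ?_
    have := (abs_sub_lt_iff.mp ((Real.dist_eq _ _ ▸ PiLp.dist_apply_le x y w).trans_lt hxy)).1
    push_cast at hxw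
    linarith
  refine (abs_linearExtension_sub_le hxσ hyτ (c := d w) fun v hv => ?_).trans ?_
  · rcases Finset.mem_union.mp hv with hv | hv
    exacts [hd σ hσ v hv w hwσ, hd τ hτ v hv w hwτ]
  · gcongr
    have := Finset.card_union_le σ τ
    exact_mod_cast (by omega : (σ ∪ τ).card ≤ 2 * (k + 1))

end LinearExtension

section LowerBound
variable {V : Type*} [Fintype V] [DecidableEq V] {X : SComplex V}

lemma edgeGraph_dist_le_mul_pathDist (k : ℕ) (a b : V) :
    ((edgeGraph X).dist a b : ℝ≥0∞) ≤ NNReal.sqrt (2 * (k + 1)) *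
      pathDist (realization (X.skeleton k)) (EuclideanSpace.single a 1)
        (EuclideanSpace.single b 1) := by
  set d : V → ℝ := fun v => (edgeGraph X).dist a v
  rw [pathDist, ENNReal.mul_iInf_of_ne (by positivity) ENNReal.coe_ne_top]
  refine le_iInf fun ⟨γ, hγ, h0, h1, hs⟩ => ?_
  have hf : ∀ x ∈ realization (X.skeleton k), ∀ y ∈ realization (X.skeleton k),
      dist x y < ((k : ℝ) + 1)⁻¹ →
      dist (linearExtension d x) (linearExtension d y) ≤ NNReal.sqrt (2 * (k + 1)) * dist x y :=
    fun x hx y hy hxy => by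
      simpa [Real.dist_eq] using abs_linearExtension_sub_le_of_dist_lt
        (fun σ hσ v hv w hw => abs_dist_sub_dist_le_one_of_mem_face hσ a hv hw) hx hy hxy
  simpa [h0, h1, linearExtension_single, d, edist_dist, Real.dist_eq] using
    edist_le_mul_eVariationOn_of_dist_lt (by positivity) hf hγ hs

lemma edgeGraph_diam_le_mul_pathDiam (hG : (edgeGraph X).Connected) (k : ℕ) :
    ((edgeGraph X).diam : ℝ≥0∞) ≤
      NNReal.sqrt (2 * (k + 1)) * pathDiam (realization (X.skeleton k)) := by
  have := hG.nonempty
  obtain ⟨a, b, hab⟩ := (edgeGraph X).exists_dist_eq_diam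
  rw [← hab]
  refine (edgeGraph_dist_le_mul_pathDist k a b).trans ?_
  gcongr
  exact pathDist_le_pathDiam (single_mem_realization _ a) (single_mem_realization _ b)

end LowerBound

section UpperBound
variable {V : Type*} [Fintype V]

lemma realization_subsingleton [Subsingleton V] (X : SComplex V) :
    (realization X).Subsingleton := by
  intro x hx y hy
  obtain ⟨σ, -, hxσ⟩ := mem_iUnion₂.mp hx
  obtain ⟨τ, -, hyτ⟩ := mem_iUnion₂.mp hy
  ext v
  have hx₁ := hxσ.2.2
  have hy₁ := hyτ.2.2
  rw [Fintype.sum_subsingleton _ v] at hx₁ hy₁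
  rw [hx₁, hy₁]

lemma pathDist_le_sqrt_two_of_mem_geomFace {Y : SComplex V} {σ : Finset V} (hσ : σ ∈ Y.faces)
    {x y : EuclideanSpace ℝ V} (hx : x ∈ geomFace σ) (hy : y ∈ geomFace σ) :
    pathDist (realization Y) x y ≤ NNReal.sqrt 2 := by
  refine (pathDist_le_edist_of_segment_subset
    (((convex_geomFace σ).segment_subset hx hy).trans (subset_biUnion_of_mem hσ))).trans ?_
  rw [edist_nndist, ENNReal.coe_le_coe, ← NNReal.coe_le_coe, coe_nndist, Real.coe_sqrt]
  simpa using dist_le_sqrt_two_of_mem_geomFace hx hy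

variable [DecidableEq V] {X : SComplex V}

lemma pathDist_single_le_length {m : ℕ} (hm : 1 ≤ m) {v w : V} (p : (edgeGraph X).Walk v w) :
    pathDist (realization (X.skeleton m)) (EuclideanSpace.single v 1) (EuclideanSpace.single w 1)
      ≤ p.length * NNReal.sqrt 2 := by
  induction p with
  | nil => simp [pathDist_self (single_mem_realization _ _)]
  | @cons u v w huv p ih =>
    have hedge : ({u, v} : Finset V) ∈ (X.skeleton m).faces :=
      ⟨huv.2, Finset.card_le_two.trans (by omega)⟩
    calc _ ≤ _ + _ := pathDist_triangle _ _ (EuclideanSpace.single v (1 : ℝ)) _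
      _ ≤ NNReal.sqrt 2 + p.length * NNReal.sqrt 2 := by
        gcongr
        exact pathDist_le_sqrt_two_of_mem_geomFace hedge (single_mem_geomFace (v := u) (by simp))
          (single_mem_geomFace (v := v) (by simp))
      _ = (p.cons huv).length * NNReal.sqrt 2 := by
        rw [SimpleGraph.Walk.length_cons]; push_cast; ring

lemma pathDist_skeleton_le {m : ℕ} (hm : 1 ≤ m) (hG : (edgeGraph X).Connected)
    {x y : EuclideanSpace ℝ V} (hx : x ∈ realization (X.skeleton m))
    (hy : y ∈ realization (X.skeleton m)) :
    pathDist (realization (X.skeleton m)) x y ≤ NNReal.sqrt 2 * ((edgeGraph X).diam + 2) := by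
  obtain ⟨σ, hσ, hxσ⟩ := mem_iUnion₂.mp hx
  obtain ⟨τ, hτ, hyτ⟩ := mem_iUnion₂.mp hy
  obtain ⟨v, hv⟩ := exists_pos_of_mem_geomFace hxσ
  obtain ⟨w, hw⟩ := exists_pos_of_mem_geomFace hyτ
  have hvσ := single_mem_geomFace (mem_of_mem_geomFace_of_pos hxσ hv)
  have hwτ := single_mem_geomFace (mem_of_mem_geomFace_of_pos hyτ hw)
  have := hG.nonempty
  obtain ⟨p, hp⟩ := hG.exists_walk_length_eq_dist v w
  have hpD : p.length ≤ (edgeGraph X).diam :=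
    hp ▸ SimpleGraph.dist_le_diam (SimpleGraph.connected_iff_ediam_ne_top.mp hG)
  calc pathDist _ x y
      ≤ pathDist _ x (EuclideanSpace.single v 1) + (pathDist _ (EuclideanSpace.single v 1)
          (EuclideanSpace.single w 1) + pathDist _ (EuclideanSpace.single w 1) y) :=
        (pathDist_triangle _ _ _ _).trans (add_le_add_right (pathDist_triangle _ _ _ _) _)
    _ ≤ NNReal.sqrt 2 + ((edgeGraph X).diam * NNReal.sqrt 2 + NNReal.sqrt 2) := by
        gcongr
        · exact pathDist_le_sqrt_two_of_mem_geomFace hσ hxσ hvσ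
        · exact (pathDist_single_le_length hm p).trans (by gcongr)
        · exact pathDist_le_sqrt_two_of_mem_geomFace hτ hwτ hyτ
    _ = NNReal.sqrt 2 * ((edgeGraph X).diam + 2) := by ring

lemma pathDiam_skeleton_le {m : ℕ} (hm : 1 ≤ m) (hG : (edgeGraph X).Connected) :
    pathDiam (realization (X.skeleton m)) ≤ 3 * NNReal.sqrt 2 * (edgeGraph X).diam := by
  cases subsingleton_or_nontrivial V
  · simp [pathDiam_eq_zero_of_subsingleton (realization_subsingleton _)]
  have hD : (1 : ℝ≥0∞) ≤ (edgeGraph X).diam := by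
    exact_mod_cast Nat.one_le_iff_ne_zero.mpr (SimpleGraph.connected_iff_diam_ne_zero.mp hG)
  refine iSup₂_le fun x hx => iSup₂_le fun y hy => (pathDist_skeleton_le hm hG hx hy).trans ?_
  calc NNReal.sqrt 2 * ((edgeGraph X).diam + 2 : ℝ≥0∞)
      ≤ NNReal.sqrt 2 * ((edgeGraph X).diam + 2 * (edgeGraph X).diam) := by
        gcongr; exact le_mul_of_one_le_right zero_le hD
    _ = 3 * NNReal.sqrt 2 * (edgeGraph X).diam := by ring

end UpperBound

/-- for every `2 ≤ k` there is a constant `C_k` (depending only on `k`)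
such that for every finite simplicial complex `X` of dimension `≤ n` (`k ≤ n`) with
connected realization, `diam |X_{k-1}| ≤ C_k · diam |X_k|` in the intrinsic path
metric induced by the standard metric. -/
theorem stmt_2 (k : ℕ) (hk : 2 ≤ k) :
    ∃ C : ℝ≥0, ∀ n : ℕ, k ≤ n →
      ∀ (V : Type) (_ : Fintype V) (_ : DecidableEq V) (X : SComplex V),
        (∀ σ ∈ X.faces, σ.card ≤ n + 1) →
        IsConnected (realization X) →
        pathDiam (realization (X.skeleton (k - 1))) ≤
          C * pathDiam (realization (X.skeleton k)) := by
  refine ⟨3 * NNReal.sqrt 2 * NNReal.sqrt (2 * (k + 1)), fun n _ V _ _ X _ hX => ?_⟩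
  have hG := edgeGraph_connected hX
  calc pathDiam (realization (X.skeleton (k - 1)))
      ≤ 3 * NNReal.sqrt 2 * (edgeGraph X).diam := pathDiam_skeleton_le (by omega) hG
    _ ≤ 3 * NNReal.sqrt 2 * (NNReal.sqrt (2 * (k + 1)) * pathDiam (realization (X.skeleton k))) :=
        by gcongr; exact edgeGraph_diam_le_mul_pathDiam hG k
    _ = _ := by push_cast; ring
end

section
/- Let S ⊆ ℝⁿ satisfy P₁(a), P₂(b), P₃(c), P₄(d) with c > b and d > 2b (as in the Delaunay setup). Then every top-dimensional Delaunay simplex σ ∈ Σ_n(X_S) is determined by its circumscribed sphere: if p is the unique point with ⋂_{s∈σ}V(s) = {p} and d_p := dist(p,S), then σ = S ∩ S^{n−1}(p, d_p), the set of points of S on the sphere of center p and radius d_p. -/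
noncomputable section

/-- The Voronoi cell of `s ∈ S`. -/
def VorCell {n : ℕ} (S : Set (EuclideanSpace ℝ (Fin n))) (s : EuclideanSpace ℝ (Fin n)) :
    Set (EuclideanSpace ℝ (Fin n)) :=
  {x | dist x s = Metric.infDist x S}

/-- The simplices of the Delaunay complex `X_S`: nonempty finite subsets of `S`
whose Voronoi cells have a common point. -/
def DelFaces {n : ℕ} (S : Set (EuclideanSpace ℝ (Fin n))) :
    Set (Finset (EuclideanSpace ℝ (Fin n))) :=
  {σ | σ.Nonempty ∧ ↑σ ⊆ S ∧ (⋂ s ∈ (σ : Set (EuclideanSpace ℝ (Fin n))), VorCell S s).Nonempty}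

/-- The geometric realization `|X_S| ⊆ ℝ[S]`: barycentric weight functions supported
on a Delaunay simplex. -/
def DelReal {n : ℕ} (S : Set (EuclideanSpace ℝ (Fin n))) :
    Set (EuclideanSpace ℝ (Fin n) → ℝ) :=
  {w | ∃ σ ∈ DelFaces S, (∀ x ∉ σ, w x = 0) ∧ (∀ x, 0 ≤ w x) ∧ ∑ x ∈ σ, w x = 1}

/-- The piecewise affine map `F_S : |X_S| → ℝⁿ` extending the inclusion `S ↪ ℝⁿ`. -/
def FS {n : ℕ} (w : EuclideanSpace ℝ (Fin n) → ℝ) : EuclideanSpace ℝ (Fin n) :=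
  ∑ᶠ x, w x • x

/-- P₁(a): points of `S` are `a`-separated. -/
def P1 {n : ℕ} (S : Set (EuclideanSpace ℝ (Fin n))) (a : ℝ) : Prop :=
  ∀ s ∈ S, ∀ t ∈ S, s ≠ t → a ≤ dist s t

/-- P₂(b): every closed ball of radius `b` meets `S`. -/
def P2 {n : ℕ} (S : Set (EuclideanSpace ℝ (Fin n))) (b : ℝ) : Prop :=
  ∀ x : EuclideanSpace ℝ (Fin n), ∃ s ∈ S, dist x s ≤ b

/-- P₃(c): every sphere of radius `< c` contains at most `n+1` points of `S`. -/
def P3 {n : ℕ} (S : Set (EuclideanSpace ℝ (Fin n))) (c : ℝ) : Prop :=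
  ∀ (x : EuclideanSpace ℝ (Fin n)) (r : ℝ), 0 < r → r < c →
    ∀ T : Finset (EuclideanSpace ℝ (Fin n)), ↑T ⊆ S ∩ Metric.sphere x r → T.card ≤ n + 1

/-- P₄(d): any `n+1` points of `S` of diameter `≤ d` are affinely independent. -/
def P4 {n : ℕ} (S : Set (EuclideanSpace ℝ (Fin n))) (d : ℝ) : Prop :=
  ∀ T : Finset (EuclideanSpace ℝ (Fin n)), ↑T ⊆ S → T.card = n + 1 →
    Metric.diam (T : Set (EuclideanSpace ℝ (Fin n))) ≤ d →
    AffineIndependent ℝ (fun p : (T : Set (EuclideanSpace ℝ (Fin n))) => (p : EuclideanSpace ℝ (Fin n)))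

end

/-- under `P₁(a), P₂(b), P₃(c), P₄(d)` with `c > b`, `d > 2b`, every
top-dimensional Delaunay simplex `σ` (with `⋂_{s∈σ} V(s) = {p}` and
`d_p = dist(p,S)`) is exactly the set of points of `S` on the sphere of center `p`
and radius `d_p`. -/
theorem stmt_8 {n : ℕ} (S : Set (EuclideanSpace ℝ (Fin n))) (a b c d : ℝ)
    (ha : 0 < a) (hb : 0 < b)
    (hP1 : P1 S a) (hP2 : P2 S b) (hP3 : P3 S c) (hP4 : P4 S d)
    (hcb : b < c) (hdb : 2 * b < d)
    (σ : Finset (EuclideanSpace ℝ (Fin n))) (hσ : σ ∈ DelFaces S)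
    (hcard : σ.card = n + 1)
    (p : EuclideanSpace ℝ (Fin n))
    (hp : (⋂ s ∈ (σ : Set (EuclideanSpace ℝ (Fin n))), VorCell S s) = {p}) :
    (σ : Set (EuclideanSpace ℝ (Fin n))) =
      S ∩ Metric.sphere p (Metric.infDist p S) := by
  classical
  have hpIn : p ∈ ⋂ s ∈ (σ : Set (EuclideanSpace ℝ (Fin n))), VorCell S s := by
    rw [hp]; exact rfl
  have hvor : ∀ t ∈ σ, dist p t = Metric.infDist p S := fun t ht =>
    Set.mem_iInter₂.mp hpIn t ht
  set r := Metric.infDist p S with hr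
  have hσS := hσ.2.1
  ext x
  constructor
  · intro hx
    have hx' : x ∈ σ := hx
    refine ⟨hσS hx', ?_⟩
    simp only [Metric.mem_sphere]
    rw [dist_comm]
    exact hvor x hx'
  · rintro ⟨hxS, hxsph⟩
    have hxd : dist p x = r := by rw [dist_comm]; exact hxsph
    by_contra hxσ
    have hxσ' : x ∉ σ := hxσ
    have hrb : r ≤ b := by
      obtain ⟨s, hsS, hsd⟩ := hP2 p
      exact le_trans (Metric.infDist_le_dist_of_mem hsS) hsd
    rcases eq_or_lt_of_le (Metric.infDist_nonneg (x := p) (s := S)) with h0 | hpos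
    · have hx0 : x = p := by
        have : dist p x = 0 := by rw [hxd, hr]; exact h0.symm
        exact (dist_eq_zero.mp this).symm
      obtain ⟨t, ht⟩ := hσ.1
      have ht0 : t = p := by
        have : dist p t = 0 := by rw [hvor t ht, hr]; exact h0.symm
        exact (dist_eq_zero.mp this).symm
      exact hxσ' (hx0 ▸ ht0 ▸ ht)
    · have hT : ((insert x σ : Finset _) : Set _) ⊆ S ∩ Metric.sphere p r := by
        intro y hy
        simp only [Finset.coe_insert, Set.mem_insert_iff] at hy
        rcases hy with rfl | hyσ
        · exact ⟨hxS, hxsph⟩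
        · exact ⟨hσS hyσ, by simp only [Metric.mem_sphere]; rw [dist_comm]; exact hvor y hyσ⟩
      have hcard2 : (insert x σ).card = n + 2 := by
        rw [Finset.card_insert_of_notMem hxσ', hcard]
      have := hP3 p r hpos (lt_of_le_of_lt hrb hcb) (insert x σ) hT
      omega
end

section
/- Let S ⊆ ℝⁿ satisfy P₁(a) (distinct points at distance ≥ a > 0) and suppose every Delaunay simplex has diameter ≤ 2b. Then for every compact K ⊆ ℝⁿ, only finitely many simplices σ of the Delaunay complex X_S satisfy F_S(|σ|) ∩ K ≠ ∅; consequently the piecewise-affine map F_S : |X_S| → ℝⁿ is proper. -/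
open Metric Set

/-- A uniformly separated set meets every closed ball in a finite set. -/
lemma sep_finite {n : ℕ} {S : Set (EuclideanSpace ℝ (Fin n))} {a : ℝ} (ha : 0 < a)
    (hP1 : P1 S a) (x : EuclideanSpace ℝ (Fin n)) (r : ℝ) :
    (S ∩ Metric.closedBall x r).Finite := by
  have htb : TotallyBounded (S ∩ Metric.closedBall x r) :=
    (isCompact_closedBall x r).totallyBounded.subset inter_subset_right
  obtain ⟨t, htf, hcov⟩ := (totallyBounded_iff).mp htb (a/3) (by linarith)
  have hsub : S ∩ Metric.closedBall x r ⊆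
      ⋃ y ∈ t, (S ∩ Metric.closedBall x r) ∩ ball y (a/3) := by
    intro p hp
    obtain ⟨y, hy, hpy⟩ := mem_iUnion₂.mp (hcov hp)
    exact mem_iUnion₂.mpr ⟨y, hy, hp, hpy⟩
  refine Set.Finite.subset (htf.biUnion fun y _ => ?_) hsub
  refine Set.Subsingleton.finite fun p hp q hq => ?_
  by_contra hne
  have h0 := hP1 p hp.1.1 q hq.1.1 hne
  have h1 : dist p q ≤ dist p y + dist y q := dist_triangle _ _ _
  have h2 : dist p y < a/3 := hp.2
  have h3 : dist y q < a/3 := by rw [dist_comm]; exact hq.2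
  linarith

/-- If `w` vanishes off `σ`, then `FS w` is the finite sum over `σ`. -/
lemma FS_eq_sum {n : ℕ} {w : EuclideanSpace ℝ (Fin n) → ℝ}
    {σ : Finset (EuclideanSpace ℝ (Fin n))} (hsupp : ∀ x ∉ σ, w x = 0) :
    FS w = ∑ x ∈ σ, w x • x := by
  refine finsum_eq_sum_of_support_subset _ fun x hx => ?_
  by_contra hxσ
  simp [hsupp x hxσ] at hx

/-- if `S` satisfies `P₁(a)` and every Delaunay simplex has diameter
`≤ 2b`, then for every compact `K ⊆ ℝⁿ` only finitely many Delaunay simplices have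
`F_S(|σ|) ∩ K ≠ ∅` (where `F_S(|σ|)` is the convex hull of `σ`), and consequently
`F_S : |X_S| → ℝⁿ` is proper. -/
theorem stmt_9 {n : ℕ} (S : Set (EuclideanSpace ℝ (Fin n))) (a b : ℝ)
    (ha : 0 < a) (hb : 0 < b)
    (hP1 : P1 S a)
    (hdiam : ∀ σ ∈ DelFaces S, Metric.diam (σ : Set (EuclideanSpace ℝ (Fin n))) ≤ 2 * b) :
    (∀ K : Set (EuclideanSpace ℝ (Fin n)), IsCompact K →
      {σ ∈ DelFaces S |
        ((convexHull ℝ (σ : Set (EuclideanSpace ℝ (Fin n)))) ∩ K).Nonempty}.Finite) ∧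
    IsProperMap (fun w : DelReal S => FS w.1) := by
  -- points of a Delaunay simplex containing a point `x₀` lie in `closedBall x₀ (2b)`
  have hball : ∀ σ ∈ DelFaces S, ∀ x₀ ∈ σ,
      (σ : Set (EuclideanSpace ℝ (Fin n))) ⊆ S ∩ Metric.closedBall x₀ (2*b) := by
    intro σ hσ x₀ hx₀ s hs
    refine ⟨hσ.2.1 hs, mem_closedBall.mpr ?_⟩
    calc dist s x₀ ≤ Metric.diam (σ : Set (EuclideanSpace ℝ (Fin n))) :=
          Metric.dist_le_diam_of_mem σ.finite_toSet.isBounded hs hx₀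
      _ ≤ 2*b := hdiam σ hσ
  have key : ∀ K : Set (EuclideanSpace ℝ (Fin n)), IsCompact K →
      {σ ∈ DelFaces S |
        ((convexHull ℝ (σ : Set (EuclideanSpace ℝ (Fin n)))) ∩ K).Nonempty}.Finite := by
    intro K hK
    obtain ⟨r, hr⟩ := hK.isBounded.subset_closedBall 0
    have hE : (S ∩ Metric.closedBall (0 : EuclideanSpace ℝ (Fin n)) (2*b + r)).Finite :=
      sep_finite ha hP1 _ _
    refine Set.Finite.subset hE.toFinset.powerset.finite_toSet ?_
    rintro σ ⟨hσ, y, hyh, hyK⟩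
    simp only [Finset.coe_powerset, Set.mem_preimage, Set.mem_powerset_iff, Finset.coe_subset,
      Finset.mem_coe, Finset.mem_powerset]
    intro s hs
    rw [Set.Finite.mem_toFinset]
    refine ⟨hσ.2.1 hs, mem_closedBall.mpr ?_⟩
    have h1 : dist s y ≤ Metric.diam (convexHull ℝ (σ : Set (EuclideanSpace ℝ (Fin n)))) :=
      Metric.dist_le_diam_of_mem (isBounded_convexHull.mpr σ.finite_toSet.isBounded)
        (subset_convexHull ℝ _ hs) hyh
    rw [convexHull_diam] at h1
    have h2 := hdiam σ hσ
    have h3 : dist y 0 ≤ r := hr hyK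
    calc dist s 0 ≤ dist s y + dist y 0 := dist_triangle _ _ _
      _ ≤ 2*b + r := by linarith
  refine ⟨key, ?_⟩
  rw [isProperMap_iff_isCompact_preimage]
  constructor
  · -- Continuity
    rw [continuous_iff_continuousAt]
    intro w₀
    obtain ⟨σ₀, hσ₀, hsupp₀, hpos₀, hsum₀⟩ := w₀.2
    obtain ⟨x₀, hx₀σ, hx₀⟩ : ∃ x₀ ∈ σ₀, w₀.1 x₀ ≠ 0 :=
      Finset.exists_ne_zero_of_sum_ne_zero (by rw [hsum₀]; exact one_ne_zero)
    set E := (sep_finite ha hP1 x₀ (2*b)).toFinset with hEdef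
    have hagree : ∀ w : EuclideanSpace ℝ (Fin n) → ℝ, w ∈ DelReal S → w x₀ ≠ 0 →
        FS w = ∑ x ∈ E, w x • x := by
      rintro w ⟨σ, hσ, hsupp, _, _⟩ hwx₀
      have hx₀σ' : x₀ ∈ σ := by
        by_contra h; exact hwx₀ (hsupp _ h)
      rw [FS_eq_sum hsupp]
      refine Finset.sum_subset (fun s hs => ?_) (fun x _ hxσ => by rw [hsupp x hxσ, zero_smul])
      rw [Set.Finite.mem_toFinset]
      exact hball σ hσ x₀ hx₀σ' hs
    have hg : Continuous (fun w : DelReal S => ∑ x ∈ E, w.1 x • x) :=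
      continuous_finset_sum _ fun x _ =>
        ((continuous_apply x).comp continuous_subtype_val).smul continuous_const
    have hmem : {w : DelReal S | w.1 x₀ ≠ 0} ∈ nhds w₀ := by
      refine IsOpen.mem_nhds ?_ hx₀
      exact isOpen_compl_singleton.preimage ((continuous_apply x₀).comp continuous_subtype_val)
    exact hg.continuousAt.congr
      (Filter.eventuallyEq_of_mem hmem fun w hw => (hagree w.1 w.2 hw).symm)
  · -- Compact preimages
    intro K hK
    have hΦ := key K hK
    rw [Subtype.isCompact_iff]
    set C : Finset (EuclideanSpace ℝ (Fin n)) → Set (EuclideanSpace ℝ (Fin n) → ℝ) := fun σ =>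
      (Set.univ.pi fun _ => Set.Icc (0:ℝ) 1) ∩
        ((⋂ x ∈ ((σ : Set (EuclideanSpace ℝ (Fin n)))ᶜ), {w | w x = 0}) ∩
          ({w | ∑ x ∈ σ, w x = 1} ∩ {w | ∑ x ∈ σ, w x • x ∈ K})) with hCdef
    have himg : Subtype.val '' ((fun w : DelReal S => FS w.1) ⁻¹' K) =
        ⋃ σ ∈ hΦ.toFinset, C σ := by
      ext w
      simp only [Set.mem_image, Set.mem_preimage, Set.mem_iUnion, Set.Finite.mem_toFinset]
      constructor
      · rintro ⟨u, hFK, rfl⟩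
        obtain ⟨σ, hσ, hsupp, hpos, hsum⟩ := u.2
        have hFS : FS u.1 = ∑ x ∈ σ, u.1 x • x := FS_eq_sum hsupp
        have hhull : FS u.1 ∈ convexHull ℝ (σ : Set (EuclideanSpace ℝ (Fin n))) := by
          have hc := Finset.centerMass_mem_convexHull σ (fun i _ => hpos i)
            (by rw [hsum]; exact one_pos)
            (fun i (hi : i ∈ σ) => (Finset.mem_coe.mpr hi :
              i ∈ (σ : Set (EuclideanSpace ℝ (Fin n)))))
          rw [Finset.centerMass_eq_of_sum_1 _ (fun i => i) hsum] at hc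
          rwa [hFS]
        refine ⟨σ, ⟨hσ, FS u.1, hhull, hFK⟩, ?_, Set.mem_iInter₂.mpr fun x hx => hsupp x hx,
          hsum, show ∑ x ∈ σ, u.1 x • x ∈ K from hFS ▸ hFK⟩
        intro x _
        refine ⟨hpos x, ?_⟩
        by_cases hx : x ∈ σ
        · rw [← hsum]
          exact Finset.single_le_sum (fun i _ => hpos i) hx
        · rw [hsupp x hx]; exact zero_le_one
      · rintro ⟨σ, hσΦ, hIcc, hsupp, hsum, hFK⟩
        have hsupp' : ∀ x ∉ σ, w x = 0 := fun x hx =>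
          Set.mem_iInter₂.mp hsupp x hx
        have hFS : FS w = ∑ x ∈ σ, w x • x := FS_eq_sum hsupp'
        have hwD : w ∈ DelReal S :=
          ⟨σ, hσΦ.1, hsupp', fun x => (hIcc x (Set.mem_univ x)).1, hsum⟩
        exact ⟨⟨w, hwD⟩, by rwa [hFS], rfl⟩
    rw [himg]
    refine hΦ.toFinset.isCompact_biUnion fun σ _ => ?_
    have hclosed : IsClosed (C σ) := by
      refine (isClosed_set_pi fun _ _ => isClosed_Icc).inter
        ((isClosed_biInter fun x _ => isClosed_eq (continuous_apply x) continuous_const).inter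
          ((isClosed_eq (continuous_finset_sum _ fun x _ => continuous_apply x)
            continuous_const).inter ?_))
      exact hK.isClosed.preimage (continuous_finset_sum _ fun x _ =>
        (continuous_apply x).smul continuous_const)
    exact IsCompact.of_isClosed_subset (isCompact_univ_pi fun _ => isCompact_Icc)
      hclosed Set.inter_subset_left
end

section
/- For v₁,…,v_k ∈ ℝⁿ define vol(v₁,…,v_k) := √(det((vᵢ·vⱼ)_{1≤i,j≤k})). Let s₀,…,s_n ∈ ℝⁿ with pairwise distances in [a, d] and vol(e₁,…,e_n) ≥ θ > 0, where eᵢ := (sᵢ−s₀)/|sᵢ−s₀|. Then the points s₀,…,s_n are affinely independent, and the affine map F from the standard n-simplex (with vertices at the standard basis configuration, standard metric) to ℝⁿ sending the i-th vertex to sᵢ satisfies C₁(a,θ,n)·|ξ| ≤ |dF(ξ)| ≤ C₂(d,n)·|ξ| for all tangent vectors ξ, with constants C₁ depending only on a, θ, n and C₂ depending only on d, n. -/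
/-!
The edge directions `eᵢ = (sᵢ - s₀)/|sᵢ - s₀|` are unit vectors with `|det e| = vol(e) ≥ θ`.
If `∑ ξᵢ = 0` then `y = ∑ ξᵢ sᵢ = ∑_{i ≥ 1} ξᵢ |sᵢ - s₀| eᵢ`, and Cramer's rule writes
`ξᵢ |sᵢ - s₀| det e` as the determinant of `e` with `eᵢ` replaced by `y`, which by Hadamard's
inequality is at most `‖y‖` in absolute value. So `|ξᵢ| ≤ ‖y‖ / (a θ)` for `i ≥ 1`, and
`ξ₀ = -∑_{i ≥ 1} ξᵢ` bounds the rest of `ξ`. In particular `y = 0` forces `ξ = 0`, which is affine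
independence. The upper bound is the triangle inequality.
-/

open scoped RealInnerProductSpace

/-- `vol(v₁,…,v_k) = √ det (⟪vᵢ,vⱼ⟫)`. -/
noncomputable def gramVol {n m : ℕ} (v : Fin m → EuclideanSpace ℝ (Fin n)) : ℝ :=
  Real.sqrt (Matrix.det (Matrix.of fun i j => ⟪v i, v j⟫))

open Finset Function
open scoped Matrix

theorem EuclideanSpace.norm_le_sum_abs {ι : Type*} [Fintype ι] (x : EuclideanSpace ℝ ι) :
    ‖x‖ ≤ ∑ i, |x i| := by
  let b := EuclideanSpace.basisFun ι ℝ
  calc ‖x‖ = ‖∑ i, x i • b i‖ := by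
        simpa [b, EuclideanSpace.basisFun_repr] using congrArg norm (b.sum_repr x).symm
    _ ≤ ∑ i, ‖x i • b i‖ := norm_sum_le _ _
    _ = ∑ i, |x i| := by simp [norm_smul, b.orthonormal.1]

theorem sum_smul_eq_sum_smul_sub {ι R M : Type*} [Fintype ι] [Ring R] [AddCommGroup M]
    [Module R M] {ξ : ι → R} (hξ : ∑ i, ξ i = 0) (s : ι → M) (p : M) :
    ∑ i, ξ i • s i = ∑ i, ξ i • (s i - p) := by
  simp [smul_sub, Finset.sum_sub_distrib, ← Finset.sum_smul, hξ]

theorem AlternatingMap.smul_map_eq_map_update_sum {R M N ι : Type*} [Semiring R]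
    [AddCommMonoid M] [Module R M] [AddCommMonoid N] [Module R N] [Fintype ι] [DecidableEq ι]
    (f : M [⋀^ι]→ₗ[R] N) (v : ι → M) (c : ι → R) (i : ι) :
    c i • f v = f (update v i (∑ j, c j • v j)) := by
  rw [f.map_update_sum, Finset.sum_eq_single i]
  · rw [f.map_update_smul, update_eq_self]
  · intro j _ hji
    rw [f.map_update_smul, f.map_update_self v hji.symm, smul_zero]
  · simp

section InnerProductSpace

variable {E : Type*} [NormedAddCommGroup E] [InnerProductSpace ℝ E] {n : ℕ}

theorem OrthonormalBasis.abs_det_le_prod_norm (b : OrthonormalBasis (Fin n) ℝ E)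
    (v : Fin n → E) : |b.toBasis.det v| ≤ ∏ i, ‖v i‖ := by
  have : Fact (Module.finrank ℝ E = n) := ⟨by simpa using Module.finrank_eq_card_basis b.toBasis⟩
  rw [← b.toBasis.orientation.volumeForm_robust' b v]
  exact b.toBasis.orientation.abs_volumeForm_apply_le v

theorem OrthonormalBasis.abs_det_mul_abs_le_norm_sum_smul (b : OrthonormalBasis (Fin n) ℝ E)
    {v : Fin n → E} (hv : ∀ j, ‖v j‖ ≤ 1) (c : Fin n → ℝ) (i : Fin n) :
    |b.toBasis.det v| * |c i| ≤ ‖∑ j, c j • v j‖ := by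
  set y := ∑ j, c j • v j
  calc |b.toBasis.det v| * |c i| = |b.toBasis.det (update v i y)| := by
        rw [← AlternatingMap.smul_map_eq_map_update_sum, smul_eq_mul, abs_mul, mul_comm]
    _ ≤ ∏ j, ‖update v i y j‖ := b.abs_det_le_prod_norm _
    _ = ‖y‖ * ∏ j ∈ univ.erase i, ‖v j‖ := by
        rw [← Finset.mul_prod_erase _ _ (mem_univ i), update_self]
        congr 1
        exact prod_congr rfl fun j hj => by rw [update_of_ne (ne_of_mem_erase hj)]
    _ ≤ ‖y‖ := mul_le_of_le_one_right (norm_nonneg _)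
        (prod_le_one (fun _ _ => norm_nonneg _) fun j _ => hv j)

end InnerProductSpace

theorem gramVol_eq_abs_det {n : ℕ} (b : OrthonormalBasis (Fin n) ℝ (EuclideanSpace ℝ (Fin n)))
    (v : Fin n → EuclideanSpace ℝ (Fin n)) : gramVol v = |b.toBasis.det v| := by
  have hG : (Matrix.of fun i j => ⟪v i, v j⟫) =
      (b.toBasis.toMatrix v)ᵀ * b.toBasis.toMatrix v := by
    ext i j
    simp [Matrix.mul_apply, Module.Basis.toMatrix_apply, OrthonormalBasis.coe_toBasis_repr_apply,
      OrthonormalBasis.repr_apply_apply, ← b.sum_inner_mul_inner (v i) (v j),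
      real_inner_comm]
  rw [gramVol, hG, Matrix.det_mul, Matrix.det_transpose, ← sq, Real.sqrt_sq_eq_abs,
    Module.Basis.det_apply]

theorem affineIndependent_of_mul_norm_le {ι V : Type*} [Fintype ι] [NormedAddCommGroup V]
    [NormedSpace ℝ V] (s : ι → V) {C : ℝ} (hC : 0 < C)
    (h : ∀ ξ : EuclideanSpace ℝ ι, ∑ i, ξ i = 0 → C * ‖ξ‖ ≤ ‖∑ i, ξ i • s i‖) :
    AffineIndependent ℝ s := by
  rw [affineIndependent_iff_of_fintype]
  intro w hw hws
  rw [univ.weightedVSub_eq_linear_combination hw] at hws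
  have hle := h (WithLp.toLp 2 w) hw
  simp only [hws, norm_zero] at hle
  have hzero : WithLp.toLp 2 w = 0 := norm_le_zero_iff.1 (nonpos_of_mul_nonpos_right hle hC)
  exact fun i => congrArg (fun x : EuclideanSpace ℝ ι => x i) hzero

theorem norm_sum_smul_le {ι V : Type*} [Fintype ι] [SeminormedAddCommGroup V] [NormedSpace ℝ V]
    (s : ι → V) (i₀ : ι) {D : ℝ} (hD : ∀ i, ‖s i - s i₀‖ ≤ D) {ξ : EuclideanSpace ℝ ι}
    (hξ : ∑ i, ξ i = 0) : ‖∑ i, ξ i • s i‖ ≤ Fintype.card ι * D * ‖ξ‖ := by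
  rw [sum_smul_eq_sum_smul_sub hξ s (s i₀)]
  calc ‖∑ i, ξ i • (s i - s i₀)‖ ≤ ∑ i, ‖ξ i • (s i - s i₀)‖ := norm_sum_le _ _
    _ ≤ ∑ _i : ι, D * ‖ξ‖ := by
        gcongr with i
        rw [norm_smul, mul_comm]
        exact mul_le_mul (hD i) (PiLp.norm_apply_le ξ i) (norm_nonneg _)
          ((norm_nonneg _).trans (hD i))
    _ = Fintype.card ι * D * ‖ξ‖ := by rw [sum_const, card_univ, nsmul_eq_mul, mul_assoc]

theorem norm_le_two_mul_sum_abs_succ {n : ℕ} {ξ : EuclideanSpace ℝ (Fin (n + 1))}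
    (hξ : ∑ i, ξ i = 0) : ‖ξ‖ ≤ 2 * ∑ i : Fin n, |ξ i.succ| := by
  have h₀ : |ξ 0| ≤ ∑ i : Fin n, |ξ i.succ| := by
    rw [Fin.sum_univ_succ, add_eq_zero_iff_eq_neg] at hξ
    rw [hξ, abs_neg]
    exact abs_sum_le_sum_abs _ _
  calc ‖ξ‖ ≤ ∑ i, |ξ i| := ξ.norm_le_sum_abs
    _ = |ξ 0| + ∑ i : Fin n, |ξ i.succ| := Fin.sum_univ_succ _
    _ ≤ 2 * ∑ i : Fin n, |ξ i.succ| := by linarith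

section EdgeDirections

variable {E : Type*} [NormedAddCommGroup E] [NormedSpace ℝ E] {n : ℕ}

noncomputable def edgeDir (s : Fin (n + 1) → E) (i : Fin n) : E :=
  (dist (s i.succ) (s 0))⁻¹ • (s i.succ - s 0)

-- Holds also when `s i.succ = s 0`, where `edgeDir s i = 0` because `0⁻¹ = 0`.
theorem dist_smul_edgeDir (s : Fin (n + 1) → E) (i : Fin n) :
    dist (s i.succ) (s 0) • edgeDir s i = s i.succ - s 0 := by
  by_cases h : s i.succ = s 0
  · simp [edgeDir, h]
  · exact smul_inv_smul₀ (dist_ne_zero.2 h) _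

theorem norm_edgeDir_le_one (s : Fin (n + 1) → E) (i : Fin n) : ‖edgeDir s i‖ ≤ 1 := by
  rw [edgeDir, norm_smul, norm_inv, Real.norm_of_nonneg dist_nonneg, dist_eq_norm]
  exact inv_mul_le_one_of_le₀ le_rfl (norm_nonneg _)

theorem sum_smul_eq_sum_smul_edgeDir (s : Fin (n + 1) → E) {ξ : Fin (n + 1) → ℝ}
    (hξ : ∑ i, ξ i = 0) :
    ∑ i, ξ i • s i = ∑ i : Fin n, (ξ i.succ * dist (s i.succ) (s 0)) • edgeDir s i := by
  rw [sum_smul_eq_sum_smul_sub hξ s (s 0), Fin.sum_univ_succ, sub_self, smul_zero, zero_add]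
  simp_rw [mul_smul, dist_smul_edgeDir]

end EdgeDirections

section Simplex

variable {E : Type*} [NormedAddCommGroup E] [InnerProductSpace ℝ E] {n : ℕ}

theorem abs_det_edgeDir_mul_le (b : OrthonormalBasis (Fin n) ℝ E) (s : Fin (n + 1) → E)
    {ξ : Fin (n + 1) → ℝ} (hξ : ∑ i, ξ i = 0) (i : Fin n) :
    |b.toBasis.det (edgeDir s)| * (|ξ i.succ| * dist (s i.succ) (s 0)) ≤ ‖∑ j, ξ j • s j‖ := by
  have := b.abs_det_mul_abs_le_norm_sum_smul (norm_edgeDir_le_one s)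
    (fun i => ξ i.succ * dist (s i.succ) (s 0)) i
  rwa [← sum_smul_eq_sum_smul_edgeDir s hξ, abs_mul, abs_of_nonneg dist_nonneg] at this

theorem mul_norm_le_norm_sum_smul (b : OrthonormalBasis (Fin n) ℝ E) {s : Fin (n + 1) → E}
    {a θ : ℝ} (ha : 0 ≤ a) (hθ : 0 ≤ θ) (hs : ∀ i : Fin n, a ≤ dist (s i.succ) (s 0))
    (hdet : θ ≤ |b.toBasis.det (edgeDir s)|) {ξ : EuclideanSpace ℝ (Fin (n + 1))}
    (hξ : ∑ i, ξ i = 0) : θ * a / (2 * n + 1) * ‖ξ‖ ≤ ‖∑ i, ξ i • s i‖ := by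
  set y := ‖∑ i, ξ i • s i‖
  have hcoord (i : Fin n) : θ * a * |ξ i.succ| ≤ y :=
    calc θ * a * |ξ i.succ| = θ * (|ξ i.succ| * a) := by ring
      _ ≤ |b.toBasis.det (edgeDir s)| * (|ξ i.succ| * dist (s i.succ) (s 0)) := by
          gcongr; exact hs i
      _ ≤ y := abs_det_edgeDir_mul_le b s hξ i
  have hnorm : θ * a * ‖ξ‖ ≤ 2 * n * y :=
    calc θ * a * ‖ξ‖ ≤ θ * a * (2 * ∑ i : Fin n, |ξ i.succ|) := by
          gcongr; exact norm_le_two_mul_sum_abs_succ hξ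
      _ = 2 * ∑ i : Fin n, θ * a * |ξ i.succ| := by
          simp only [mul_sum, mul_left_comm]
      _ ≤ 2 * ∑ _i : Fin n, y := by gcongr with i; exact hcoord i
      _ = 2 * n * y := by rw [sum_const, card_univ, Fintype.card_fin, nsmul_eq_mul, mul_assoc]
  rw [div_mul_eq_mul_div, div_le_iff₀ (by positivity)]
  nlinarith [norm_nonneg (∑ i, ξ i • s i)]

end Simplex

/-- quantitative nondegeneracy.  If `s₀,…,s_n ∈ ℝⁿ` have pairwise
distances in `[a,d]` and the unit vectors `eᵢ = (sᵢ-s₀)/|sᵢ-s₀|` satisfy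
`vol(e₁,…,e_n) ≥ θ`, then the points are affinely independent and the differential
of the affine map from the standard simplex sending the `i`-th vertex to `sᵢ`
(given on sum-zero vectors `ξ` by `ξ ↦ ∑ ξᵢ sᵢ`) satisfies
`C₁ ‖ξ‖ ≤ ‖∑ ξᵢ sᵢ‖ ≤ C₂ ‖ξ‖` with `C₁ = C₁(a,θ,n)` and `C₂ = C₂(d,n)`. -/
theorem stmt_13 (n : ℕ) (a θ : ℝ) (ha : 0 < a) (hθ : 0 < θ) :
    ∃ C₁ > (0 : ℝ), ∀ d : ℝ, ∃ C₂ > (0 : ℝ),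
      ∀ s : Fin (n + 1) → EuclideanSpace ℝ (Fin n),
        (∀ i j, i ≠ j → a ≤ dist (s i) (s j) ∧ dist (s i) (s j) ≤ d) →
        θ ≤ gramVol (fun i : Fin n => (dist (s i.succ) (s 0))⁻¹ • (s i.succ - s 0)) →
        AffineIndependent ℝ s ∧
        ∀ ξ : EuclideanSpace ℝ (Fin (n + 1)), (∑ i, ξ i) = 0 →
          C₁ * ‖ξ‖ ≤ ‖∑ i, ξ i • s i‖ ∧ ‖∑ i, ξ i • s i‖ ≤ C₂ * ‖ξ‖ := by
  refine ⟨θ * a / (2 * n + 1), by positivity, fun d => ⟨(n + 1) * (|d| + 1), by positivity,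
    fun s hs hvol => ?_⟩⟩
  let b := EuclideanSpace.basisFun (Fin n) ℝ
  have hdet : θ ≤ |b.toBasis.det (edgeDir s)| := by
    rw [← gramVol_eq_abs_det b]; exact hvol
  have hlower (ξ : EuclideanSpace ℝ (Fin (n + 1))) (hξ : ∑ i, ξ i = 0) :=
    mul_norm_le_norm_sum_smul b ha.le hθ.le (fun i : Fin n => (hs _ _ i.succ_ne_zero).1) hdet hξ
  have hedge (i : Fin (n + 1)) : ‖s i - s 0‖ ≤ |d| + 1 := by
    rcases eq_or_ne i 0 with rfl | hi
    · simp only [sub_self, norm_zero]; positivity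
    · rw [← dist_eq_norm]; linarith [(hs i 0 hi).2, le_abs_self d]
  refine ⟨affineIndependent_of_mul_norm_le s (by positivity) hlower, fun ξ hξ => ⟨hlower ξ hξ, ?_⟩⟩
  simpa using norm_sum_smul_le s 0 hedge hξ
end

section
/- Let σ = {v₀,…,v_k} be a k-simplex (k ≥ 1) realized with the standard metric (vertices at standard basis vectors of ℝ^{k+1}), and let h : |σ| → ℝ be the affine function with h(vⱼ) = hⱼ where h₀,…,h_k are distinct integers. Then at every point of |σ| there exists a unit tangent vector η to |σ| with dh(η) ≥ 1/√2. -/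
/-! Pick two vertices with `h i < h j`; as the values are integers, `h j - h i ≥ 1`. The edge
direction `(v_j - v_i) / √2` is a unit tangent vector of the simplex and `dh` sends it to
`(h j - h i) / √2 ≥ 1 / √2`. Being a constant direction, it works at every point. -/

open Finset

namespace EuclideanSpace

variable {ι : Type*} [Fintype ι] [DecidableEq ι]

noncomputable def edgeDirection (i j : ι) : EuclideanSpace ℝ ι :=
  (√2)⁻¹ • (single j 1 - single i 1)

lemma sum_edgeDirection (i j : ι) : ∑ m, edgeDirection i j m = 0 := by
  simp [edgeDirection, ← mul_sum, sum_sub_distrib]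

lemma norm_edgeDirection {i j : ι} (hij : i ≠ j) : ‖edgeDirection i j‖ = 1 := by
  have hsq : ‖single j (1 : ℝ) - single i 1‖ ^ 2 = 2 := by
    norm_num [norm_sub_sq_real, inner_single_left, hij.symm]
  have hnorm : ‖single j (1 : ℝ) - single i 1‖ = √2 := by
    rw [← hsq, Real.sqrt_sq (norm_nonneg _)]
  rw [edgeDirection, norm_smul, hnorm, norm_inv, Real.norm_of_nonneg (Real.sqrt_nonneg 2),
    inv_mul_cancel₀ (by positivity)]

lemma sum_edgeDirection_mul (i j : ι) (f : ι → ℝ) :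
    ∑ m, edgeDirection i j m * f m = (f j - f i) / √2 := by
  simp only [edgeDirection, PiLp.smul_apply, PiLp.sub_apply, PiLp.single_apply, smul_eq_mul,
    mul_assoc, sub_mul, ite_mul, one_mul, zero_mul, ← mul_sum, sum_sub_distrib, sum_ite_eq',
    mem_univ, ↓reduceIte]
  ring

end EuclideanSpace

lemma Function.Injective.exists_add_one_le {ι : Type*} [Nontrivial ι] {h : ι → ℤ}
    (hinj : Function.Injective h) : ∃ i j, i ≠ j ∧ h i + 1 ≤ h j := by
  obtain ⟨a, b, hab⟩ := exists_pair_ne ι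
  rcases (hinj.ne hab).lt_or_gt with hlt | hlt
  · exact ⟨a, b, hab, hlt⟩
  · exact ⟨b, a, hab.symm, hlt⟩

theorem stmt_15_general (k : ℕ) (hk : 1 ≤ k) (h : Fin (k + 1) → ℤ)
    (hinj : Function.Injective h) :
    ∃ η : EuclideanSpace ℝ (Fin (k + 1)),
      (∑ j, η j) = 0 ∧ ‖η‖ = 1 ∧ 1 / Real.sqrt 2 ≤ ∑ j, η j * (h j : ℝ) := by
  have : Nontrivial (Fin (k + 1)) := Fin.nontrivial_iff_two_le.mpr (by omega)
  obtain ⟨i, j, hij, hgap⟩ := hinj.exists_add_one_le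
  refine ⟨EuclideanSpace.edgeDirection i j, EuclideanSpace.sum_edgeDirection i j,
    EuclideanSpace.norm_edgeDirection hij, ?_⟩
  rw [EuclideanSpace.sum_edgeDirection_mul]
  have hgap' : (h i : ℝ) + 1 ≤ h j := by exact_mod_cast hgap
  gcongr
  linarith

/-- if `h` is the affine function on the standard `k`-simplex (`k ≥ 1`)
taking distinct integer values `h j` at the vertices, then at every point of the
simplex there is a unit tangent vector `η` (i.e. `∑ η j = 0`, `‖η‖ = 1`) with
`dh(η) = ∑ η j * h j ≥ 1/√2`. -/
theorem stmt_15 (k : ℕ) (hk : 1 ≤ k) (h : Fin (k + 1) → ℤ)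
    (hinj : Function.Injective h)
    (x : EuclideanSpace ℝ (Fin (k + 1))) (hx : WithLp.ofLp x ∈ stdSimplex ℝ (Fin (k + 1))) :
    ∃ η : EuclideanSpace ℝ (Fin (k + 1)),
      (∑ j, η j) = 0 ∧ ‖η‖ = 1 ∧ 1 / Real.sqrt 2 ≤ ∑ j, η j * (h j : ℝ) :=
  stmt_15_general k hk h hinj
end

section
/- Let S ⊆ ℝⁿ satisfy P₁(a), P₂(b), P₃(c), P₄(d) with c > b, d > 2b, and let (X_S, F_S) be the Delaunay triangulation. Then the piecewise-affine map F_S : |X_S| → ℝⁿ is injective. -/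
/-!
Two facts combine. First, the points of `S` on an empty sphere centred at `z` (the points of `S`
nearest to `z`) are affinely independent. There are at most `n + 1` of them by P₃, since the
empty radius is at most `b < c` by P₂; if there are exactly `n + 1`, they lie within `2b < d` of
each other and P₄ applies. If there are fewer, moving the centre orthogonally to their affine
span keeps them equidistant from it, and the empty sphere grows until it meets a new point of
`S` (local finiteness of `S` comes from P₁), so one concludes by induction.

Second, the lifting to the paraboloid. Let `w`, `w'` be weights on Delaunay simplices with
empty spheres centred at `z`, `z'` and with the same barycentre. The power
`dist y x ^ 2 - infDist y S ^ 2` of `x` with respect to the empty sphere at `y` is nonnegative on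
`S` and vanishes on that sphere, and its sum against the weights `w' - w` does not depend on `y`.
Comparing `y = z` and `y = z'` forces the `w'`-average of the power at `z` to vanish, so `w'`
also lives on the sphere at `z`, where barycentric coordinates are unique.
-/

open Metric Set
open scoped RealInnerProductSpace

def nearestPoints {X : Type*} [PseudoMetricSpace X] (S : Set X) (z : X) : Set X :=
  S ∩ sphere z (infDist z S)

section MetricSpace

variable {X : Type*} [PseudoMetricSpace X] {S : Set X} {z s : X}

theorem mem_nearestPoints_iff : s ∈ nearestPoints S z ↔ s ∈ S ∧ dist z s ≤ infDist z S := by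
  refine and_congr_right fun hs => ?_
  rw [mem_sphere, dist_comm]
  exact ⟨le_of_eq, fun h => le_antisymm h (infDist_le_dist_of_mem hs)⟩

theorem dist_eq_infDist_of_mem_nearestPoints (hs : s ∈ nearestPoints S z) :
    dist z s = infDist z S := by
  rw [dist_comm]; exact hs.2

theorem exists_dist_le_of_eventually_exists_dist_lt
    (hS : ∀ x (R : ℝ), (S ∩ closedBall x R).Finite) {p : ℝ → X} (hp : Continuous p) (q : X)
    {t₀ : ℝ} (h : ∀ᶠ t in nhdsWithin t₀ (Ioi t₀), ∃ s ∈ S, dist (p t) s < dist (p t) q) :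
    ∃ s ∈ S, dist (p t₀) s ≤ dist (p t₀) q := by
  obtain ⟨t₁, ht₁, hI⟩ := mem_nhdsGT_iff_exists_Ioc_subset.1 h
  obtain ⟨C, hC⟩ := (isCompact_Icc.image hp).isBounded.subset_closedBall (p t₀)
  have hpC : ∀ t ∈ Icc t₀ t₁, dist (p t) (p t₀) ≤ C := fun t ht => hC (mem_image_of_mem p ht)
  -- Only the finitely many points of `F` can beat `q` on `Ioc t₀ t₁`, and each of them does so on
  -- a closed set of times, so the contact passes to the closure `Icc t₀ t₁`.
  set F := S ∩ closedBall (p t₀) (2 * C + dist (p t₀) q)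
  have hcover : Ioc t₀ t₁ ⊆ ⋃ s ∈ F, {t | dist (p t) s ≤ dist (p t) q} := by
    intro t ht
    obtain ⟨s, hs, hlt⟩ := hI ht
    have hCt := hpC t (Ioc_subset_Icc_self ht)
    have hsF : dist s (p t₀) ≤ 2 * C + dist (p t₀) q := by
      linarith [dist_triangle s (p t) (p t₀), dist_triangle (p t) (p t₀) q, dist_comm s (p t)]
    exact mem_biUnion ⟨hs, hsF⟩ hlt.le
  have hclosed : IsClosed (⋃ s ∈ F, {t | dist (p t) s ≤ dist (p t) q}) :=
    (hS _ _).isClosed_biUnion fun s _ =>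
      isClosed_le (hp.dist continuous_const) (hp.dist continuous_const)
  have ht₀ : t₀ ∈ closure (Ioc t₀ t₁) := by
    rw [closure_Ioc ht₁.ne]; exact left_mem_Icc.2 ht₁.le
  obtain ⟨s, hsF, hs⟩ := mem_iUnion₂.1 (closure_minimal hcover hclosed ht₀)
  exact ⟨s, hsF.1, hs⟩

end MetricSpace

section InnerProductSpace

variable {V : Type*} [NormedAddCommGroup V] [InnerProductSpace ℝ V]

theorem exists_norm_eq_one_inner_sub_eq_zero [FiniteDimensional ℝ V] {T : Set V}
    (hT : T.Finite) (hne : T.Nonempty) (hcard : T.ncard ≤ Module.finrank ℝ V) :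
    ∃ u : V, ‖u‖ = 1 ∧ ∀ s ∈ T, ∀ s' ∈ T, ⟪s - s', u⟫ = 0 := by
  have : Fintype T := hT.fintype
  have : Nonempty T := hne.to_subtype
  have hspan : Module.finrank ℝ (vectorSpan ℝ T) < Module.finrank ℝ V := by
    have := finrank_vectorSpan_range_add_one_le ℝ ((↑) : T → V)
    rw [Subtype.range_coe, ← Nat.card_eq_fintype_card, Nat.card_coe_set_eq] at this
    omega
  have hne_top : vectorSpan ℝ T ≠ ⊤ := fun h => by
    rw [h, finrank_top] at hspan; exact hspan.false
  obtain ⟨v, hv, hv0⟩ := Submodule.exists_mem_ne_zero_of_ne_bot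
    (fun h => hne_top (Submodule.orthogonal_eq_bot_iff.1 h))
  refine ⟨‖v‖⁻¹ • v, norm_smul_inv_norm hv0, fun s hs s' hs' => ?_⟩
  exact (Submodule.mem_orthogonal _ _).1 (Submodule.smul_mem _ _ hv) _
    (vsub_mem_vectorSpan ℝ hs hs')

theorem dist_add_smul_eq_of_inner_sub_eq_zero {z s s' u : V} (hd : dist z s = dist z s')
    (hu : ⟪s - s', u⟫ = 0) (t : ℝ) : dist (z + t • u) s = dist (z + t • u) s' := by
  have key : ∀ x : V,
      dist (z + t • u) x ^ 2 = dist z x ^ 2 + 2 * t * ⟪z - x, u⟫ + t ^ 2 * ‖u‖ ^ 2 := by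
    intro x
    rw [dist_eq_norm, dist_eq_norm, show z + t • u - x = (z - x) + t • u by abel,
      norm_add_sq_real, real_inner_smul_right, norm_smul, Real.norm_eq_abs, mul_pow, sq_abs]
    ring
  have hzu : ⟪z - s, u⟫ = ⟪z - s', u⟫ := by
    rw [← sub_eq_zero, ← inner_sub_left, show z - s - (z - s') = -(s - s') by abel, inner_neg_left,
      hu, neg_zero]
  refine (pow_left_inj₀ dist_nonneg dist_nonneg two_ne_zero).1 ?_
  rw [key, key, hd, hzu]

theorem sum_mul_dist_sq_sub_sq {U : Finset V} {v : V → ℝ} (h₀ : ∑ x ∈ U, v x = 0)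
    (h₁ : ∑ x ∈ U, v x • x = 0) (y : V) (r : ℝ) :
    ∑ x ∈ U, v x * (dist y x ^ 2 - r ^ 2) = ∑ x ∈ U, v x * ‖x‖ ^ 2 := by
  have expand : ∀ x, v x * (dist y x ^ 2 - r ^ 2) =
      v x * ‖x‖ ^ 2 + (‖y‖ ^ 2 - r ^ 2) * v x - 2 * ⟪y, v x • x⟫ := by
    intro x
    rw [dist_eq_norm, norm_sub_sq_real, real_inner_smul_right]
    ring
  simp only [expand, Finset.sum_sub_distrib, Finset.sum_add_distrib, ← Finset.mul_sum,
    ← inner_sum, h₀, h₁, inner_zero_right]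
  ring

theorem mem_nearestPoints_of_sum_smul_eq {S : Set V} {U : Finset V} {w w' : V → ℝ} {z z' : V}
    (hw : ∀ x ∈ U, w x ≠ 0 → x ∈ nearestPoints S z)
    (hw' : ∀ x ∈ U, w' x ≠ 0 → x ∈ nearestPoints S z')
    (hwnn : ∀ x ∈ U, 0 ≤ w x) (hwnn' : ∀ x ∈ U, 0 ≤ w' x)
    (hsum : ∑ x ∈ U, w x = ∑ x ∈ U, w' x) (hsmul : ∑ x ∈ U, w x • x = ∑ x ∈ U, w' x • x) :
    ∀ x ∈ U, w' x ≠ 0 → x ∈ nearestPoints S z := by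
  -- `D y x` is the power of `x` with respect to the empty sphere centred at `y`.
  set D : V → V → ℝ := fun y x => dist y x ^ 2 - infDist y S ^ 2
  have hD_nonneg : ∀ y, ∀ x ∈ S, 0 ≤ D y x := fun y x hx =>
    sub_nonneg.2 (pow_le_pow_left₀ infDist_nonneg (infDist_le_dist_of_mem hx) 2)
  have hsum_zero : ∀ {u : V → ℝ} {y}, (∀ x ∈ U, u x ≠ 0 → x ∈ nearestPoints S y) →
      ∑ x ∈ U, u x * D y x = 0 := fun {u y} hu => Finset.sum_eq_zero fun x hx => by
    by_cases h : u x = 0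
    · rw [h, zero_mul]
    · simp only [D, dist_eq_infDist_of_mem_nearestPoints (hu x hx h), sub_self, mul_zero]
  have hterm_nonneg : ∀ {u : V → ℝ} {y y'}, (∀ x ∈ U, 0 ≤ u x) →
      (∀ x ∈ U, u x ≠ 0 → x ∈ nearestPoints S y') → ∀ x ∈ U, 0 ≤ u x * D y x :=
    fun {u y y'} hnn hu x hx => by
      by_cases h : u x = 0
      · rw [h, zero_mul]
      · exact mul_nonneg (hnn x hx) (hD_nonneg _ x (hu x hx h).1)
  -- Against weights of total mass zero and barycentre zero, the power does not depend on `y`.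
  have hdiff : ∀ y, ∑ x ∈ U, (w' x - w x) * D y x = ∑ x ∈ U, (w' x - w x) * ‖x‖ ^ 2 := fun y =>
    sum_mul_dist_sq_sub_sq (v := fun x => w' x - w x)
      (by rw [Finset.sum_sub_distrib, hsum, sub_self])
      (by simp only [sub_smul, Finset.sum_sub_distrib, hsmul, sub_self]) y _
  have hsplit : ∀ y, ∑ x ∈ U, (w' x - w x) * D y x =
      ∑ x ∈ U, w' x * D y x - ∑ x ∈ U, w x * D y x := fun y => by
    rw [← Finset.sum_sub_distrib]; simp only [sub_mul]
  have hzero : ∑ x ∈ U, w' x * D z x = 0 := by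
    refine le_antisymm ?_ (Finset.sum_nonneg (hterm_nonneg hwnn' hw'))
    linarith [hdiff z, hdiff z', hsplit z, hsplit z', hsum_zero hw, hsum_zero hw',
      Finset.sum_nonneg (hterm_nonneg (y := z') hwnn hw)]
  intro x hx hx0
  have hxS := (hw' x hx hx0).1
  have hDx := (Finset.sum_eq_zero_iff_of_nonneg (hterm_nonneg hwnn' hw')).1 hzero x hx
  refine mem_nearestPoints_iff.2 ⟨hxS, ?_⟩
  have : D z x = 0 := (mul_eq_zero.1 hDx).resolve_left hx0
  exact (pow_le_pow_iff_left₀ dist_nonneg infDist_nonneg two_ne_zero).1 (sub_eq_zero.1 this).le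

end InnerProductSpace

theorem AffineIndependent.eq_of_sum_eq_sum_of_support {k V : Type*} [Ring k] [AddCommGroup V]
    [Module k V] {T : Set V} (hT : AffineIndependent k ((↑) : T → V)) {U : Finset V}
    {w w' : V → k} (hw : ∀ x, w x ≠ 0 → x ∈ U ∧ x ∈ T) (hw' : ∀ x, w' x ≠ 0 → x ∈ U ∧ x ∈ T)
    (hsum : ∑ x ∈ U, w x = ∑ x ∈ U, w' x) (hsmul : ∑ x ∈ U, w x • x = ∑ x ∈ U, w' x • x) :
    w = w' := by
  classical
  set U' := U.filter (· ∈ T)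
  have hU' : AffineIndependent k ((↑) : U' → V) :=
    hT.mono fun x hx => (Finset.mem_filter.1 hx).2
  have hvanish : ∀ {f : V → k}, (∀ x, f x ≠ 0 → x ∈ U ∧ x ∈ T) → ∀ x ∉ U', f x = 0 :=
    fun hf x hx => by_contra fun h => hx (Finset.mem_filter.2 (hf x h))
  have hsumU : ∀ {f : V → k}, (∀ x, f x ≠ 0 → x ∈ U ∧ x ∈ T) →
      ∑ x ∈ U', f x = ∑ x ∈ U, f x := fun hf =>
    Finset.sum_subset (Finset.filter_subset _ _) fun x _ hx => hvanish hf x hx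
  have hsmulU : ∀ {f : V → k}, (∀ x, f x ≠ 0 → x ∈ U ∧ x ∈ T) →
      ∑ x ∈ U', f x • x = ∑ x ∈ U, f x • x := fun hf =>
    Finset.sum_subset (Finset.filter_subset _ _) fun x _ hx => by rw [hvanish hf x hx, zero_smul]
  have key := hU'.eq_of_sum_eq_sum_subtype (w₁ := w) (w₂ := w')
    ((hsumU hw).trans (hsum.trans (hsumU hw').symm))
    ((hsmulU hw).trans (hsmul.trans (hsmulU hw').symm))
  funext x
  by_cases hx : x ∈ U'
  · exact key x hx
  · rw [hvanish hw x hx, hvanish hw' x hx]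

section Delaunay

variable {n : ℕ} {S : Set (EuclideanSpace ℝ (Fin n))} {a b c d : ℝ}

local notation "E" => EuclideanSpace ℝ (Fin n)

theorem P1.finite_inter_closedBall (ha : 0 < a) (hS : P1 S a) (x : E) (R : ℝ) :
    (S ∩ closedBall x R).Finite := by
  obtain ⟨t, ht, hcover⟩ := totallyBounded_iff.1 (isCompact_closedBall x R).totallyBounded
    (a / 2) (half_pos ha)
  refine (ht.biUnion fun y _ => (?_ : (S ∩ ball y (a / 2)).Finite)).subset fun p hp => ?_
  · refine Subsingleton.finite fun p hp q hq => by_contra fun hpq => ?_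
    have := hS p hp.1 q hq.1 hpq
    linarith [dist_triangle_right p q y, mem_ball.1 hp.2, mem_ball.1 hq.2]
  · obtain ⟨y, hy, hpy⟩ := mem_iUnion₂.1 (hcover hp.2)
    exact mem_iUnion₂.2 ⟨y, hy, hp.1, hpy⟩

theorem P1.finite_nearestPoints (ha : 0 < a) (hS : P1 S a) (z : E) :
    (nearestPoints S z).Finite :=
  (hS.finite_inter_closedBall ha z _).subset (inter_subset_inter_right _ sphere_subset_closedBall)

theorem P2.infDist_le (hS : P2 S b) (z : E) : infDist z S ≤ b :=
  let ⟨_, hs, hd⟩ := hS z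
  (infDist_le_dist_of_mem hs).trans hd

theorem ncard_nearestPoints_le (hP2 : P2 S b) (hP3 : P3 S c) (hbc : b < c) (z : E) :
    (nearestPoints S z).ncard ≤ n + 1 := by
  by_cases hfin : (nearestPoints S z).Finite
  swap
  · rw [Set.Infinite.ncard hfin]; omega
  rcases (infDist_nonneg (x := z) (s := S)).eq_or_lt with h0 | hpos
  · have hsub : nearestPoints S z ⊆ {z} := by
      rw [nearestPoints, ← h0, sphere_zero]; exact inter_subset_right
    exact (ncard_le_ncard hsub).trans (ncard_singleton z).le |>.trans (by omega)
  · rw [ncard_eq_toFinset_card _ hfin]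
    exact hP3 z _ hpos ((hP2.infDist_le z).trans_lt hbc) _ (by rw [hfin.coe_toFinset]; rfl)

theorem affineIndependent_nearestPoints_of_ncard_eq (hP2 : P2 S b) (hP4 : P4 S d)
    (hbd : 2 * b < d) {z : E} (hcard : (nearestPoints S z).ncard = n + 1) :
    AffineIndependent ℝ ((↑) : nearestPoints S z → E) := by
  have hfin := finite_of_ncard_ne_zero (s := nearestPoints S z) (by omega)
  have hdiam : diam (nearestPoints S z) ≤ d := by
    refine diam_le_of_forall_dist_le
      (by linarith [hP2.infDist_le z, infDist_nonneg (x := z) (s := S)]) fun x hx y hy => ?_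
    linarith [dist_triangle_left x y z, dist_eq_infDist_of_mem_nearestPoints hx,
      dist_eq_infDist_of_mem_nearestPoints hy, hP2.infDist_le z]
  have := hP4 hfin.toFinset (by rw [hfin.coe_toFinset]; exact inter_subset_left)
    (by rwa [← ncard_eq_toFinset_card _ hfin]) (by rwa [hfin.coe_toFinset])
  rwa [hfin.coe_toFinset] at this

theorem exists_nearestPoints_ssuperset (ha : 0 < a) (hP1 : P1 S a) (hP2 : P2 S b) {z : E}
    (hne : (nearestPoints S z).Nonempty) (hcard : (nearestPoints S z).ncard ≤ n) :
    ∃ z', nearestPoints S z ⊂ nearestPoints S z' := by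
  set T := nearestPoints S z
  obtain ⟨s₀, hs₀⟩ := hne
  obtain ⟨u, hu, hTu⟩ := exists_norm_eq_one_inner_sub_eq_zero (hP1.finite_nearestPoints ha z)
    ⟨s₀, hs₀⟩ (by rwa [finrank_euclideanSpace_fin])
  set p : ℝ → E := fun t => z + t • u
  have hp : Continuous p := by fun_prop
  have hdist_p : ∀ t, dist (p t) z = |t| := fun t => by
    simp [p, dist_eq_norm, norm_smul, hu]
  have hT_eq : ∀ s ∈ T, ∀ t, dist (p t) s = dist (p t) s₀ := fun s hs =>
    dist_add_smul_eq_of_inner_sub_eq_zero ((dist_eq_infDist_of_mem_nearestPoints hs).trans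
      (dist_eq_infDist_of_mem_nearestPoints hs₀).symm) (hTu s hs s₀ hs₀)
  -- the times at which the sphere centred at `p t` through `s₀` is still empty
  set A := {t : ℝ | 0 ≤ t ∧ dist (p t) s₀ ≤ infDist (p t) S}
  have hA_closed : IsClosed A :=
    isClosed_le continuous_const continuous_id |>.inter <|
      isClosed_le (hp.dist continuous_const) ((continuous_infDist_pt S).comp hp)
  have hA_bdd : BddAbove A := ⟨infDist z S + b, fun t ht => by
    have := dist_triangle (p t) s₀ z
    rw [hdist_p, abs_of_nonneg ht.1, dist_comm s₀,
      dist_eq_infDist_of_mem_nearestPoints hs₀] at this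
    linarith [ht.2, hP2.infDist_le (p t)]⟩
  have hA0 : (0 : ℝ) ∈ A := ⟨le_rfl, by
    simp [p, dist_eq_infDist_of_mem_nearestPoints hs₀]⟩
  set t₀ := sSup A
  have ht₀ : t₀ ∈ A := hA_closed.csSup_mem ⟨0, hA0⟩ hA_bdd
  have hsub : T ⊆ nearestPoints S (p t₀) := fun s hs =>
    mem_nearestPoints_iff.2 ⟨hs.1, (hT_eq s hs t₀).trans_le ht₀.2⟩
  have hnew : ∀ᶠ t in nhdsWithin t₀ (Ioi t₀), ∃ s ∈ S \ T, dist (p t) s < dist (p t) s₀ := by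
    refine eventually_nhdsWithin_of_forall fun t ht => ?_
    have htA : t ∉ A := fun h => (le_csSup hA_bdd h).not_gt ht
    have hlt : infDist (p t) S < dist (p t) s₀ :=
      not_le.1 fun h => htA ⟨ht₀.1.trans (le_of_lt ht), h⟩
    obtain ⟨s, hs, hslt⟩ := (infDist_lt_iff ⟨s₀, hs₀.1⟩).1 hlt
    exact ⟨s, ⟨hs, fun hsT => hslt.ne (hT_eq s hsT t)⟩, hslt⟩
  obtain ⟨s, hs, hs_le⟩ := exists_dist_le_of_eventually_exists_dist_lt
    (fun x R => (hP1.finite_inter_closedBall ha x R).subset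
      (inter_subset_inter_left _ sdiff_subset)) hp s₀ hnew
  exact ⟨p t₀, (ssubset_iff_of_subset hsub).2
    ⟨s, mem_nearestPoints_iff.2 ⟨hs.1, hs_le.trans ht₀.2⟩, hs.2⟩⟩

theorem affineIndependent_nearestPoints (ha : 0 < a) (hP1 : P1 S a) (hP2 : P2 S b)
    (hP3 : P3 S c) (hP4 : P4 S d) (hbc : b < c) (hbd : 2 * b < d) (z : E) :
    AffineIndependent ℝ ((↑) : nearestPoints S z → E) := by
  induction hk : n + 1 - (nearestPoints S z).ncard using Nat.strong_induction_on generalizing z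
    with
  | _ k ih =>
    rcases (nearestPoints S z).eq_empty_or_nonempty with hempty | hne
    · rw [hempty]; exact affineIndependent_of_subsingleton ℝ _
    rcases (ncard_nearestPoints_le hP2 hP3 hbc z).eq_or_lt with hcard | hcard
    · exact affineIndependent_nearestPoints_of_ncard_eq hP2 hP4 hbd hcard
    obtain ⟨z', hzz'⟩ := exists_nearestPoints_ssuperset ha hP1 hP2 hne (by omega)
    have hlt := ncard_lt_ncard hzz' (hP1.finite_nearestPoints ha z')
    have hle := ncard_nearestPoints_le hP2 hP3 hbc z'
    exact (ih _ (by omega) z' rfl).mono hzz'.subset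

theorem exists_subset_nearestPoints_of_mem_DelReal {w : E → ℝ} (hw : w ∈ DelReal S) :
    ∃ σ : Finset E, ∃ z, ↑σ ⊆ nearestPoints S z ∧ (∀ x, w x ≠ 0 → x ∈ σ) ∧ (∀ x, 0 ≤ w x) ∧
      ∑ x ∈ σ, w x = 1 := by
  obtain ⟨σ, ⟨-, hσS, z, hz⟩, hw0, hwnn, hw1⟩ := hw
  refine ⟨σ, z, fun s hs => ⟨hσS hs, ?_⟩, fun x h => by_contra fun hx => h (hw0 x hx), hwnn, hw1⟩
  rw [mem_sphere, dist_comm]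
  exact mem_iInter₂.1 hz s hs

theorem FS_eq_sum_s17 {w : E → ℝ} {U : Finset E} (hw : ∀ x, w x ≠ 0 → x ∈ U) :
    FS w = ∑ x ∈ U, w x • x :=
  finsum_eq_sum_of_support_subset _ fun x hx => hw x (left_ne_zero_of_smul hx)

end Delaunay

theorem stmt_17_general {n : ℕ} (S : Set (EuclideanSpace ℝ (Fin n))) (a b c d : ℝ)
    (ha : 0 < a)
    (hP1 : P1 S a) (hP2 : P2 S b) (hP3 : P3 S c) (hP4 : P4 S d)
    (hcb : b < c) (hdb : 2 * b < d) :
    Set.InjOn FS (DelReal S) := by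
  classical
  intro w hw w' hw' hFS
  obtain ⟨σ, z, hσ, hwσ, hwnn, hw1⟩ := exists_subset_nearestPoints_of_mem_DelReal hw
  obtain ⟨σ', z', hσ', hwσ', hwnn', hw1'⟩ := exists_subset_nearestPoints_of_mem_DelReal hw'
  have hwU : ∀ x, w x ≠ 0 → x ∈ σ ∪ σ' := fun x h => Finset.mem_union_left _ (hwσ x h)
  have hwU' : ∀ x, w' x ≠ 0 → x ∈ σ ∪ σ' := fun x h => Finset.mem_union_right _ (hwσ' x h)
  have hsum : ∑ x ∈ σ ∪ σ', w x = ∑ x ∈ σ ∪ σ', w' x := by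
    rw [← Finset.sum_subset Finset.subset_union_left fun x _ hx => by_contra (hx ∘ hwσ x),
      ← Finset.sum_subset Finset.subset_union_right fun x _ hx => by_contra (hx ∘ hwσ' x),
      hw1, hw1']
  have hsmul : ∑ x ∈ σ ∪ σ', w x • x = ∑ x ∈ σ ∪ σ', w' x • x := by
    rw [← FS_eq_sum_s17 hwU, ← FS_eq_sum_s17 hwU', hFS]
  have hw'z := mem_nearestPoints_of_sum_smul_eq (fun x _ h => hσ (hwσ x h))
    (fun x _ h => hσ' (hwσ' x h)) (fun x _ => hwnn x) (fun x _ => hwnn' x) hsum hsmul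
  exact (affineIndependent_nearestPoints ha hP1 hP2 hP3 hP4 hcb hdb z).eq_of_sum_eq_sum_of_support
    (fun x h => ⟨hwU x h, hσ (hwσ x h)⟩) (fun x h => ⟨hwU' x h, hw'z x (hwU' x h) h⟩) hsum hsmul

/-- under `P₁(a), P₂(b), P₃(c), P₄(d)` with `c > b`, `d > 2b`, the
piecewise affine map `F_S : |X_S| → ℝⁿ` of the Delaunay complex is injective. -/
theorem stmt_17 {n : ℕ} (S : Set (EuclideanSpace ℝ (Fin n))) (a b c d : ℝ)
    (ha : 0 < a) (hb : 0 < b)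
    (hP1 : P1 S a) (hP2 : P2 S b) (hP3 : P3 S c) (hP4 : P4 S d)
    (hcb : b < c) (hdb : 2 * b < d) :
    Set.InjOn FS (DelReal S) :=
  stmt_17_general S a b c d ha hP1 hP2 hP3 hP4 hcb hdb
end
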